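/- arXiv:2109.10749 — 2 statements merged into one kernel-verified Lean document; each statement's English description precedes it below -/
import Mathlib

section
/- An inextendible path in convex-covtree is finite if and only if it contains a singleton node {C_m} where C_m is neither the m-chain nor the m-antichain. -/
/-- A strict partial order on `Fin n` (a representative of an `n`-order). -/
def FinSPO (n : ℕ) : Type :=
  {r : Fin n → Fin n → Prop // Transitive r ∧ ∀ x : Fin n, ¬ r x x}

/-- Order-isomorphism of representatives. -/
def IsoFin {n : ℕ} (p q : FinSPO n) : Prop :=
  ∃ g : Fin n ≃ Fin n, ∀ a b : Fin n, p.1 a b ↔ q.1 (g a) (g b)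

/-- An `n`-order: an order-isomorphism class of `n`-element strict partial orders. -/
def NOrder (n : ℕ) : Type := Quot (@IsoFin n)

/-- The `n`-order represented by `p`. -/
def toNOrder {n : ℕ} (p : FinSPO n) : NOrder n := Quot.mk _ p

/-- `S` is a (finite) convex subset of the causet `(α, r)`. -/
def IsConvexIn {α : Type*} (r : α → α → Prop) (S : Set α) : Prop :=
  S.Finite ∧ ∀ x ∈ S, ∀ y ∈ S, ∀ z : α, r x z → r z y → z ∈ S

/-- The representative `p` is realised by a convex subset of the causet `(α, r)`. -/
def RepConvex {α : Type*} (r : α → α → Prop) {n : ℕ} (p : FinSPO n) : Prop :=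
  ∃ g : Fin n → α, Function.Injective g ∧ IsConvexIn r (Set.range g) ∧
    ∀ a b : Fin n, p.1 a b ↔ r (g a) (g b)

/-- The set of `n`-convex-suborders of the causet `(α, r)`. -/
def convexSubords {α : Type*} (r : α → α → Prop) (n : ℕ) : Set (NOrder n) :=
  {o | ∃ p : FinSPO n, o = toNOrder p ∧ RepConvex r p}

/-- A (finite or countably infinite) causal set: a countable strict partial order
which is locally finite. -/
structure Causet where
  carrier : Type
  rel : carrier → carrier → Prop
  countable : Countable carrier
  trans : Transitive rel
  irrefl : ∀ x : carrier, ¬ rel x x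
  locFin : ∀ x y : carrier, {z : carrier | rel x z ∧ rel z y}.Finite

/-- `C` is a certificate of `Γ`: the set of `n`-convex-suborders of `C` equals `Γ`. -/
def IsCert (C : Causet) {n : ℕ} (Γ : Set (NOrder n)) : Prop :=
  convexSubords C.rel n = Γ

/-- `Γ` is a node of convex-covtree: it has at least one certificate. -/
def IsNodeCC {n : ℕ} (Γ : Set (NOrder n)) : Prop := ∃ C : Causet, IsCert C Γ

/-- `O⁻(Γ)`: the set of `n`-orders represented by convex subsets of representatives
of members of `Γ`. -/
def Ominus {n : ℕ} (Γ : Set (NOrder (n + 1))) : Set (NOrder n) :=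
  {o | ∃ q : FinSPO n, o = toNOrder q ∧
    ∃ p : FinSPO (n + 1), toNOrder p ∈ Γ ∧ RepConvex p.1 q}

/-- `p` is a chain. -/
def IsChainRep {n : ℕ} (p : FinSPO n) : Prop :=
  ∀ a b : Fin n, a ≠ b → p.1 a b ∨ p.1 b a

/-- `p` is an antichain. -/
def IsAntichainRep {n : ℕ} (p : FinSPO n) : Prop := ∀ a b : Fin n, ¬ p.1 a b

/-- A maximal node: no node `Δ` of `(n+1)`-orders has `O⁻(Δ) = Γ`. -/
def IsMaxNode {n : ℕ} (Γ : Set (NOrder (n + 1))) : Prop :=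
  ¬ ∃ Δ : Set (NOrder (n + 2)), IsNodeCC Δ ∧ Ominus Δ = Γ

/-- An infinite path in convex-covtree: a sequence of nodes `Γ_{m+1} = P m`,
beginning at the level-1 node, with `Γ_n = O⁻(Γ_{n+1})` for all `n ≥ 1`. -/
def InfPath (P : ∀ m : ℕ, Set (NOrder (m + 1))) : Prop :=
  P 0 = Set.univ ∧ (∀ m : ℕ, IsNodeCC (P m)) ∧ ∀ m : ℕ, P m = Ominus (P (m + 1))

/-- A finite inextendible path `Γ_1, …, Γ_{j+1}` in convex-covtree (`Γ_{m+1} = P m`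
for `m ≤ j`): it begins at the level-1 node, consists of nodes, satisfies
`Γ_m = O⁻(Γ_{m+1})`, and terminates at a maximal node. -/
def FinPath (P : ∀ m : ℕ, Set (NOrder (m + 1))) (j : ℕ) : Prop :=
  P 0 = Set.univ ∧ (∀ m : ℕ, m ≤ j → IsNodeCC (P m)) ∧
    (∀ m : ℕ, m < j → P m = Ominus (P (m + 1))) ∧ IsMaxNode (P j)

section Basics

theorem isoFin_refl {n : ℕ} (p : FinSPO n) : IsoFin p p :=
  ⟨Equiv.refl _, fun _ _ => Iff.rfl⟩

theorem isoFin_symm {n : ℕ} {p q : FinSPO n} (h : IsoFin p q) : IsoFin q p := by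
  obtain ⟨g, hg⟩ := h
  refine ⟨g.symm, fun a b => ?_⟩
  have := (hg (g.symm a) (g.symm b)).symm
  simpa using this

theorem isoFin_trans {n : ℕ} {p q r : FinSPO n} (h1 : IsoFin p q) (h2 : IsoFin q r) :
    IsoFin p r := by
  obtain ⟨g, hg⟩ := h1; obtain ⟨g', hg'⟩ := h2
  exact ⟨g.trans g', fun a b => (hg a b).trans (hg' (g a) (g b))⟩

theorem isoFin_equivalence (n : ℕ) : Equivalence (@IsoFin n) :=
  ⟨isoFin_refl, isoFin_symm, isoFin_trans⟩

theorem toNOrder_eq_iff {n : ℕ} {p q : FinSPO n} :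
    toNOrder p = toNOrder q ↔ IsoFin p q := by
  unfold toNOrder
  refine (Quot.eq (r := @IsoFin n)).trans ?_
  exact (isoFin_equivalence n).eqvGen_iff

theorem isChain_of_iso {n : ℕ} {p q : FinSPO n} (h : IsoFin p q) (hc : IsChainRep p) :
    IsChainRep q := by
  obtain ⟨g, hg⟩ := h
  intro a b hab
  have h2 : g.symm a ≠ g.symm b := fun he => hab (by simpa using congrArg g he)
  rcases hc _ _ h2 with h3 | h3
  · left; have := (hg (g.symm a) (g.symm b)).mp h3; simpa using this
  · right; have := (hg (g.symm b) (g.symm a)).mp h3; simpa using this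

theorem isAntichain_of_iso {n : ℕ} {p q : FinSPO n} (h : IsoFin p q)
    (hc : IsAntichainRep p) : IsAntichainRep q := by
  obtain ⟨g, hg⟩ := h
  intro a b hab
  exact hc (g.symm a) (g.symm b) (by have := (hg (g.symm a) (g.symm b)); simpa using this.mpr (by simpa using hab))

/-- asymmetry from transitivity + irreflexivity -/
theorem rel_asymm {α : Type*} {r : α → α → Prop} (htr : Transitive r)
    (hirr : ∀ x, ¬ r x x) {a b : α} (h : r a b) : ¬ r b a :=
  fun h' => hirr a (htr h h')

/-- a finite nonempty set has an `r`-maximal element -/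
theorem exists_rel_max {α : Type*} {r : α → α → Prop} (htr : Transitive r)
    (hirr : ∀ x, ¬ r x x) {W : Set α} (hW : W.Finite) (hne : W.Nonempty) :
    ∃ z ∈ W, ∀ w ∈ W, ¬ r z w := by
  classical
  set F := hW.toFinset with hF
  have hFne : F.Nonempty := by
    obtain ⟨x, hx⟩ := hne
    exact ⟨x, by simp [hF, hx]⟩
  obtain ⟨z, hzF, hmax⟩ := F.exists_max_image
    (fun w => (F.filter (fun u => r u w)).card) hFne
  refine ⟨z, by simpa [hF] using hzF, fun w hw hzw => ?_⟩
  have hwF : w ∈ F := by simpa [hF] using hw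
  have hss : F.filter (fun u => r u z) ⊂ F.filter (fun u => r u w) := by
    refine Finset.ssubset_iff_of_subset ?_ |>.mpr ?_
    · intro u hu
      simp only [Finset.mem_filter] at hu ⊢
      exact ⟨hu.1, htr hu.2 hzw⟩
    · exact ⟨z, by simp [hzF, hzw], by simp [hirr z]⟩
  exact absurd (hmax w hwF) (by simpa using Finset.card_lt_card hss)

/-- a finite nonempty set has an `r`-minimal element -/
theorem exists_rel_min {α : Type*} {r : α → α → Prop} (htr : Transitive r)
    (hirr : ∀ x, ¬ r x x) {W : Set α} (hW : W.Finite) (hne : W.Nonempty) :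
    ∃ z ∈ W, ∀ w ∈ W, ¬ r w z := by
  have := exists_rel_max (r := flip r) (fun a b c h1 h2 => htr h2 h1) hirr hW hne
  simpa [flip] using this

end Basics

section Extend

variable {α : Type*} {r : α → α → Prop}

/-- auxiliary case of the extension lemma: there is an element below `S` -/
private theorem convex_extend_aux (htr : Transitive r) (hirr : ∀ x, ¬ r x x)
    (hloc : ∀ x y : α, {z : α | r x z ∧ r z y}.Finite) {S : Set α}
    (hS : IsConvexIn r S) {z0 : α} (hz0 : z0 ∉ S) {y0 : α} (hy0 : y0 ∈ S)
    (hz0y0 : r z0 y0) :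
    ∃ z ∉ S, IsConvexIn r (insert z S) := by
  classical
  -- U : elements outside S lying below some element of S
  set U : Set α := {z | z ∉ S ∧ ∃ y ∈ S, r z y} with hU
  set W : Set α := {w ∈ U | w = z0 ∨ r z0 w} with hW
  have hWfin : W.Finite := by
    have hsub : W ⊆ {z0} ∪ ⋃ y ∈ S, {w | r z0 w ∧ r w y} := by
      rintro w ⟨⟨hwS, y, hy, hwy⟩, hw2⟩
      rcases hw2 with rfl | hw2
      · exact Or.inl rfl
      · exact Or.inr (Set.mem_biUnion hy ⟨hw2, hwy⟩)
    exact Set.Finite.subset ((Set.finite_singleton z0).union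
      (hS.1.biUnion (fun y _ => hloc z0 y))) hsub
  have hWne : W.Nonempty := ⟨z0, ⟨⟨hz0, y0, hy0, hz0y0⟩, Or.inl rfl⟩⟩
  obtain ⟨z, hzW, hzmax⟩ := exists_rel_max htr hirr hWfin hWne
  obtain ⟨⟨hzS, yz, hyz, hzyz⟩, hz2⟩ := hzW
  refine ⟨z, hzS, (hS.1.insert z), ?_⟩
  intro x hx y hy w hxw hwy
  rcases hx with rfl | hx
  · -- x = z
    rcases hy with rfl | hy
    · exact absurd (htr hxw hwy) (hirr _)
    · -- z ≺ w ≺ y ∈ S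
      by_cases hwS : w ∈ S
      · exact Or.inr hwS
      · exfalso
        have hwW : w ∈ W := by
          refine ⟨⟨hwS, y, hy, hwy⟩, Or.inr ?_⟩
          rcases hz2 with rfl | hz2
          · exact hxw
          · exact htr hz2 hxw
        exact hzmax w hwW hxw
  · rcases hy with rfl | hy
    · -- x ∈ S, x ≺ w ≺ z ≺ yz
      exact Or.inr (hS.2 x hx yz hyz w hxw (htr hwy hzyz))
    · exact Or.inr (hS.2 x hx y hy w hxw hwy)

theorem isConvexIn_flip {S : Set α} :
    IsConvexIn (flip r) S ↔ IsConvexIn r S := by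
  constructor <;> rintro ⟨h1, h2⟩ <;>
    exact ⟨h1, fun x hx y hy z hz1 hz2 => h2 y hy x hx z hz2 hz1⟩

/-- the convex-set extension lemma -/
theorem convex_extend (htr : Transitive r) (hirr : ∀ x, ¬ r x x)
    (hloc : ∀ x y : α, {z : α | r x z ∧ r z y}.Finite) {S : Set α}
    (hS : IsConvexIn r S) {z0 : α} (hz0 : z0 ∉ S) :
    ∃ z ∉ S, IsConvexIn r (insert z S) := by
  classical
  by_cases hU : ∃ z ∉ S, ∃ y ∈ S, r z y
  · obtain ⟨z, hzS, y, hy, hzy⟩ := hU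
    exact convex_extend_aux htr hirr hloc hS hzS hy hzy
  · by_cases hV : ∃ z ∉ S, ∃ y ∈ S, r y z
    · obtain ⟨z, hzS, y, hy, hyz⟩ := hV
      have htr' : Transitive (flip r) := fun a b c h1 h2 => htr h2 h1
      have hloc' : ∀ x y : α, {z : α | flip r x z ∧ flip r z y}.Finite := by
        intro x y
        have := hloc y x
        apply Set.Finite.subset this
        rintro w ⟨h1, h2⟩
        exact ⟨h2, h1⟩
      obtain ⟨w, hwS, hw⟩ := convex_extend_aux (r := flip r) htr' hirr hloc'
        (isConvexIn_flip.mpr hS) hzS hy hyz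
      exact ⟨w, hwS, isConvexIn_flip.mp hw⟩
    · push_neg at hU hV
      refine ⟨z0, hz0, hS.1.insert z0, ?_⟩
      intro x hx y hy w hxw hwy
      rcases hx with rfl | hx
      · rcases hy with rfl | hy
        · exact absurd (htr hxw hwy) (hirr _)
        · by_cases hwS : w ∈ S
          · exact Or.inr hwS
          · exact absurd hwy (hU w hwS y hy)
      · rcases hy with rfl | hy
        · by_cases hwS : w ∈ S
          · exact Or.inr hwS
          · exact absurd hxw (hV w hwS x hx)
        · exact Or.inr (hS.2 x hx y hy w hxw hwy)

end Extend

section Grow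

variable {α : Type*} {r : α → α → Prop}

/-- convex-suborder relation is transitive through representatives -/
theorem repConvex_comp {n N : ℕ} {P : FinSPO N} {q : FinSPO n}
    (h1 : RepConvex r P) (h2 : RepConvex P.1 q) : RepConvex r q := by
  obtain ⟨g, hginj, ⟨hgfin, hgconv⟩, hgrel⟩ := h1
  obtain ⟨h, hhinj, ⟨hhfin, hhconv⟩, hhrel⟩ := h2
  refine ⟨g ∘ h, hginj.comp hhinj, ⟨?_, ?_⟩, fun a b => (hhrel a b).trans (hgrel _ _)⟩
  · exact Set.finite_range _
  · rintro x ⟨a, rfl⟩ y ⟨b, rfl⟩ z hxz hzy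
    have hz : z ∈ Set.range g := by
      apply hgconv (g (h a)) ⟨_, rfl⟩ (g (h b)) ⟨_, rfl⟩ z hxz hzy
    obtain ⟨c, rfl⟩ := hz
    have h1 : P.1 (h a) c := (hgrel _ _).mpr hxz
    have h2' : P.1 c (h b) := (hgrel _ _).mpr hzy
    obtain ⟨d, hd⟩ := hhconv (h a) ⟨a, rfl⟩ (h b) ⟨b, rfl⟩ c h1 h2'
    exact ⟨d, by simp [Function.comp, hd]⟩

theorem repConvex_self {n : ℕ} (p : FinSPO n) : RepConvex p.1 p := by
  refine ⟨id, fun a b h => h, ⟨?_, ?_⟩, fun a b => Iff.rfl⟩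
  · exact Set.finite_range _
  · intro x _ y _ z _ _; exact ⟨z, rfl⟩

theorem snoc_inj {α : Type*} {n : ℕ} {g : Fin n → α} {z : α}
    (hginj : Function.Injective g) (hz : z ∉ Set.range g) :
    Function.Injective (Fin.snoc g z : Fin (n + 1) → α) := by
  intro a b hab
  rcases Fin.eq_castSucc_or_eq_last a with ⟨a', rfl⟩ | rfl <;>
    rcases Fin.eq_castSucc_or_eq_last b with ⟨b', rfl⟩ | rfl
  · rw [Fin.snoc_castSucc, Fin.snoc_castSucc] at hab
    exact congrArg _ (hginj hab)
  · rw [Fin.snoc_castSucc, Fin.snoc_last] at hab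
    exact absurd ⟨a', hab⟩ hz
  · rw [Fin.snoc_castSucc, Fin.snoc_last] at hab
    exact absurd ⟨b', hab.symm⟩ hz
  · rfl

/-- build a one-bigger convex suborder around a given one (general ambient version) -/
theorem grow_one_gen {α : Type*} {r : α → α → Prop} (htr : Transitive r)
    (hirr : ∀ x, ¬ r x x) (hloc : ∀ x y : α, {z : α | r x z ∧ r z y}.Finite)
    {n : ℕ} (q : FinSPO n) (h : RepConvex r q)
    (hout : ∀ g : Fin n → α, Function.Injective g → ∃ z : α, z ∉ Set.range g) :
    ∃ q' : FinSPO (n + 1), RepConvex r q' ∧ RepConvex q'.1 q := by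
  classical
  obtain ⟨g, hginj, hgconv, hgrel⟩ := h
  obtain ⟨z0, hz0⟩ := hout g hginj
  obtain ⟨z, hz, hconv⟩ := convex_extend htr hirr hloc hgconv hz0
  set g' : Fin (n + 1) → α := Fin.snoc g z with hg'
  have hg'cast : ∀ i : Fin n, g' i.castSucc = g i := fun i => Fin.snoc_castSucc _ _ _
  have hg'last : g' (Fin.last n) = z := Fin.snoc_last _ _
  have hg'inj : Function.Injective g' := snoc_inj hginj hz
  have hrange : Set.range g' = insert z (Set.range g) := by
    ext v
    constructor
    · rintro ⟨a, rfl⟩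
      rcases Fin.eq_castSucc_or_eq_last a with ⟨a', rfl⟩ | rfl
      · exact Or.inr ⟨a', (hg'cast a').symm⟩
      · exact Or.inl hg'last
    · rintro (rfl | ⟨a, rfl⟩)
      · exact ⟨Fin.last n, hg'last⟩
      · exact ⟨a.castSucc, hg'cast a⟩
  refine ⟨⟨fun a b => r (g' a) (g' b),
      fun a b c h1 h2 => htr h1 h2, fun a => hirr _⟩, ?_, ?_⟩
  · exact ⟨g', hg'inj, by rw [hrange.symm] at hconv; exact (hrange ▸ hconv), fun a b => Iff.rfl⟩
  · refine ⟨Fin.castSucc, Fin.castSucc_injective n, ⟨Set.toFinite _, ?_⟩, ?_⟩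
    · rintro x ⟨a, rfl⟩ y ⟨b, rfl⟩ c h1 h2
      simp only at h1 h2
      rw [hg'cast] at h1 h2
      have hc : g' c ∈ Set.range g := by
        rcases hgconv.2 (g a) ⟨a, rfl⟩ (g b) ⟨b, rfl⟩ (g' c) h1 h2 with ⟨d, hd⟩
        exact ⟨d, hd⟩
      obtain ⟨d, hd⟩ := hc
      refine ⟨d, hg'inj ?_⟩
      rw [hg'cast]; exact hd
    · intro a b
      simp only
      rw [hg'cast, hg'cast]
      exact hgrel a b

theorem exists_out_of_range {α : Type*} {M n : ℕ} (hMn : n < M)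
    {h : Fin M → α} (hhinj : Function.Injective h)
    {g : Fin n → α} (hginj : Function.Injective g) : ∃ z : α, z ∉ Set.range g := by
  classical
  by_contra hcon
  push_neg at hcon
  have hch : ∀ i : Fin M, ∃ a : Fin n, g a = h i := fun i => hcon (h i)
  set f : Fin M → Fin n := fun i => Classical.choose (hch i) with hf
  have hfspec : ∀ i, g (f i) = h i := fun i => Classical.choose_spec (hch i)
  have hfinj : Function.Injective f := by
    intro i j hij
    apply hhinj
    rw [← hfspec i, ← hfspec j, hij]
  have := Fintype.card_le_of_injective f hfinj
  simp only [Fintype.card_fin] at this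
  omega

/-- build a one-bigger convex suborder around a given one -/
theorem grow_one {N n : ℕ} (hnN : n < N) (Q : FinSPO N) (q : FinSPO n)
    (h : RepConvex Q.1 q) :
    ∃ q' : FinSPO (n + 1), RepConvex Q.1 q' ∧ RepConvex q'.1 q :=
  grow_one_gen Q.2.1 Q.2.2 (fun _ _ => Set.toFinite _) q h
    (fun g hg => exists_out_of_range hnN (fun a b hab => hab : Function.Injective (id : Fin N → Fin N)) hg)

/-- grow a convex suborder to any intermediate size -/
theorem grow_to {N : ℕ} (Q : FinSPO N) {n : ℕ} (q : FinSPO n) :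
    ∀ M, n ≤ M → M ≤ N → RepConvex Q.1 q →
      ∃ q' : FinSPO M, RepConvex Q.1 q' ∧ RepConvex q'.1 q := by
  intro M
  induction M with
  | zero =>
    intro h1 _ hq
    obtain rfl : n = 0 := Nat.le_zero.mp h1
    exact ⟨q, hq, repConvex_self q⟩
  | succ M ih =>
    intro h1 h2 hq
    rcases Nat.lt_or_ge n (M + 1) with hlt | hge
    · have hnM : n ≤ M := Nat.lt_succ_iff.mp hlt
      obtain ⟨q', hq'1, hq'2⟩ := ih hnM (Nat.le_of_succ_le h2) hq
      obtain ⟨q'', hq''1, hq''2⟩ := grow_one (Nat.lt_of_succ_le h2) Q q' hq'1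
      exact ⟨q'', hq''1, repConvex_comp hq''2 hq'2⟩
    · obtain rfl : n = M + 1 := le_antisymm h1 hge
      exact ⟨q, hq, repConvex_self q⟩

end Grow

section Core

open Finset

variable {N k : ℕ} (T : FinSPO N)

/-- convexity for finsets in `Fin N` -/
def Conv (S : Finset (Fin N)) : Prop :=
  ∀ x ∈ S, ∀ y ∈ S, ∀ z : Fin N, T.1 x z → T.1 z y → z ∈ S

theorem conv_isConvexIn {S : Finset (Fin N)} (h : Conv T S) :
    IsConvexIn T.1 (↑S : Set (Fin N)) :=
  ⟨Set.toFinite _, fun x hx y hy z h1 h2 => by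
    exact_mod_cast h x (by exact_mod_cast hx) y (by exact_mod_cast hy) z h1 h2⟩

/-- a convex finset of card `k` yields a representative -/
theorem conv_rep {S : Finset (Fin N)} (hS : Conv T S) (hcard : S.card = k) :
    ∃ es : Fin k → Fin N, Function.Injective es ∧ Set.range es = ↑S ∧
      RepConvex T.1 (⟨fun a b => T.1 (es a) (es b),
        fun _ _ _ h1 h2 => T.2.1 h1 h2, fun _ => T.2.2 _⟩ : FinSPO k) := by
  classical
  set e := (Finset.equivFinOfCardEq hcard).symm with he
  set es : Fin k → Fin N := fun i => (e i : Fin N) with hes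
  have hinj : Function.Injective es :=
    fun a b hab => e.injective (Subtype.ext hab)
  have hrange : Set.range es = ↑S := by
    ext v
    constructor
    · rintro ⟨i, rfl⟩; exact (e i).2
    · intro hv
      exact ⟨e.symm ⟨v, hv⟩, by simp [hes]⟩
  refine ⟨es, hinj, hrange, es, hinj, ?_, fun a b => Iff.rfl⟩
  rw [hrange]
  exact conv_isConvexIn T hS

end Core

section Transfer

open Finset

variable {N k : ℕ} {T : FinSPO N} {p : FinSPO k}

/-- between any two convex `k`-subsets there is a relation-preserving bijection -/
theorem iso_pair (H : ∀ r : FinSPO k, RepConvex T.1 r → IsoFin r p)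
    {S S' : Finset (Fin N)} (hS : Conv T S) (hS' : Conv T S')
    (hc : S.card = k) (hc' : S'.card = k) :
    ∃ φ : Fin N → Fin N, (∀ a ∈ S, φ a ∈ S') ∧ Set.InjOn φ ↑S ∧
      (∀ b ∈ S', ∃ a ∈ S, φ a = b) ∧
      (∀ a ∈ S, ∀ b ∈ S, (T.1 a b ↔ T.1 (φ a) (φ b))) := by
  classical
  obtain ⟨es, hinj, hrange, hrep⟩ := conv_rep T hS hc
  obtain ⟨es', hinj', hrange', hrep'⟩ := conv_rep T hS' hc'
  obtain ⟨g, hg⟩ := isoFin_trans (H _ hrep) (isoFin_symm (H _ hrep'))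
  -- hg : T.1 (es a) (es b) ↔ T.1 (es' (g a)) (es' (g b))
  have hk : Nonempty (Fin k) ∨ k = 0 := by
    rcases Nat.eq_zero_or_pos k with h | h
    · exact Or.inr h
    · exact Or.inl ⟨⟨0, h⟩⟩
  rcases hk with hk | h0
  · set inv : Fin N → Fin k := Function.invFun es with hinv
    have hinves : ∀ i, inv (es i) = i := fun i =>
      Function.leftInverse_invFun hinj i
    have hmem : ∀ a ∈ S, es (inv a) = a := by
      intro a ha
      apply Function.invFun_eq
      have : a ∈ Set.range es := hrange ▸ (by exact_mod_cast ha)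
      exact this
    refine ⟨fun v => es' (g (inv v)), ?_, ?_, ?_, ?_⟩
    · intro a _
      have : es' (g (inv a)) ∈ Set.range es' := ⟨_, rfl⟩
      rw [hrange'] at this; exact_mod_cast this
    · intro a ha b hb hab
      have h1 := hinj' hab
      have h2 := g.injective h1
      calc a = es (inv a) := (hmem a (by exact_mod_cast ha)).symm
        _ = es (inv b) := by rw [h2]
        _ = b := hmem b (by exact_mod_cast hb)
    · intro b hb
      have : b ∈ Set.range es' := hrange' ▸ (by exact_mod_cast hb)
      obtain ⟨j, rfl⟩ := this
      refine ⟨es (g.symm j), ?_, ?_⟩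
      · have : es (g.symm j) ∈ Set.range es := ⟨_, rfl⟩
        rw [hrange] at this; exact_mod_cast this
      · show es' (g (inv (es (g.symm j)))) = es' j
        rw [hinves]; simp
    · intro a ha b hb
      have h1 := hg (inv a) (inv b)
      show T.1 a b ↔ T.1 (es' (g (inv a))) (es' (g (inv b)))
      have e1 : T.1 (es (inv a)) (es (inv b)) ↔ T.1 (es' (g (inv a))) (es' (g (inv b))) := h1
      rw [hmem a ha, hmem b hb] at e1
      exact e1
  · -- k = 0 : both S, S' empty
    have hSe : S = ∅ := Finset.card_eq_zero.mp (h0 ▸ hc)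
    have hS'e : S' = ∅ := Finset.card_eq_zero.mp (h0 ▸ hc')
    subst hSe hS'e
    exact ⟨id, by simp, by simp, by simp, by simp⟩

/-- if some convex `k`-subset is a chain, then `p` is a chain -/
theorem chain_transfer (H : ∀ r : FinSPO k, RepConvex T.1 r → IsoFin r p)
    {S : Finset (Fin N)} (hS : Conv T S) (hc : S.card = k)
    (hch : ∀ a ∈ S, ∀ b ∈ S, a ≠ b → T.1 a b ∨ T.1 b a) : IsChainRep p := by
  obtain ⟨es, hinj, hrange, hrep⟩ := conv_rep T hS hc
  refine isChain_of_iso (H _ hrep) (fun a b hab => ?_)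
  have h1 : es a ∈ S := by
    have : es a ∈ Set.range es := ⟨a, rfl⟩
    rw [hrange] at this; exact_mod_cast this
  have h2 : es b ∈ S := by
    have : es b ∈ Set.range es := ⟨b, rfl⟩
    rw [hrange] at this; exact_mod_cast this
  exact hch _ h1 _ h2 (fun h => hab (hinj h))

/-- if some convex `k`-subset is an antichain, then `p` is an antichain -/
theorem antichain_transfer (H : ∀ r : FinSPO k, RepConvex T.1 r → IsoFin r p)
    {S : Finset (Fin N)} (hS : Conv T S) (hc : S.card = k)
    (hch : ∀ a ∈ S, ∀ b ∈ S, ¬ T.1 a b) : IsAntichainRep p := by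
  obtain ⟨es, hinj, hrange, hrep⟩ := conv_rep T hS hc
  refine isAntichain_of_iso (H _ hrep) (fun a b => ?_)
  have h1 : es a ∈ S := by
    have : es a ∈ Set.range es := ⟨a, rfl⟩
    rw [hrange] at this; exact_mod_cast this
  have h2 : es b ∈ S := by
    have : es b ∈ Set.range es := ⟨b, rfl⟩
    rw [hrange] at this; exact_mod_cast this
  exact hch _ h1 _ h2

end Transfer

section Counting

open Finset

variable {N : ℕ} (T : FinSPO N)

open Classical in
/-- number of comparabilities of `v` -/
noncomputable def deg (v : Fin N) : ℕ :=
  (univ.filter (fun u => T.1 u v ∨ T.1 v u)).card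

open Classical in
/-- number of related (ordered) pairs within `S` -/
noncomputable def Epairs (S : Finset (Fin N)) : ℕ :=
  ((S ×ˢ S).filter (fun z => T.1 z.1 z.2)).card

open Classical in
theorem count_remove {x y : Fin N} (hxy : x ≠ y) :
    Epairs T (univ \ {x, y}) + deg T x + deg T y =
      Epairs T univ + (if T.1 x y ∨ T.1 y x then 1 else 0) := by
  classical
  have hasym : ∀ a b : Fin N, T.1 a b → ¬ T.1 b a :=
    fun a b h => rel_asymm T.2.1 T.2.2 h
  set Pall := ((univ ×ˢ univ : Finset (Fin N × Fin N)).filter (fun z => T.1 z.1 z.2)) with hPall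
  set S := (univ \ {x, y} : Finset (Fin N)) with hSdef
  -- decompose
  have h1 : Epairs T S = (Pall.filter (fun z => ¬(z.1 = x ∨ z.1 = y ∨ z.2 = x ∨ z.2 = y))).card := by
    unfold Epairs
    congr 1
    ext z
    simp only [Finset.mem_filter, Finset.mem_product, Finset.mem_sdiff, Finset.mem_univ,
      Finset.mem_insert, Finset.mem_singleton, hPall, hSdef, true_and]
    tauto
  have h2 : Epairs T univ = Pall.card := by
    unfold Epairs; rfl
  set touch := Pall.filter (fun z => z.1 = x ∨ z.1 = y ∨ z.2 = x ∨ z.2 = y) with htouch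
  have h3 : touch.card + Epairs T S = Pall.card := by
    rw [h1]
    exact Finset.card_filter_add_card_filter_not _
  -- pairs touching a fixed vertex
  have hPv : ∀ v : Fin N, (Pall.filter (fun z => z.1 = v ∨ z.2 = v)).card = deg T v := by
    intro v
    have hsplit : Pall.filter (fun z => z.1 = v ∨ z.2 = v) =
        ((univ.filter (fun u => T.1 v u)).image (fun u => (v, u))) ∪
        ((univ.filter (fun u => T.1 u v)).image (fun u => (u, v))) := by
      ext z
      simp only [Finset.mem_filter, Finset.mem_union, Finset.mem_image, Finset.mem_univ,
        Finset.mem_product, hPall, true_and]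
      constructor
      · rintro ⟨hrel, h | h⟩
        · left; exact ⟨z.2, by rw [← h]; exact hrel, by rw [← h]⟩
        · right; exact ⟨z.1, by rw [← h]; exact hrel, by rw [← h]⟩
      · rintro (⟨u, hu, rfl⟩ | ⟨u, hu, rfl⟩)
        · exact ⟨hu, Or.inl rfl⟩
        · exact ⟨hu, Or.inr rfl⟩
    rw [hsplit]
    rw [Finset.card_union_of_disjoint]
    · rw [Finset.card_image_of_injective _ (fun a b h => (Prod.ext_iff.mp h).2),
        Finset.card_image_of_injective _ (fun a b h => (Prod.ext_iff.mp h).1)]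
      unfold deg
      rw [← Finset.card_union_of_disjoint]
      · congr 1
        ext u
        simp only [Finset.mem_union, Finset.mem_filter, Finset.mem_univ, true_and]
        tauto
      · rw [Finset.disjoint_filter]
        intro u _ h1 h2
        exact hasym _ _ h2 h1
    · rw [Finset.disjoint_left]
      rintro z hz1 hz2
      simp only [Finset.mem_image, Finset.mem_filter, Finset.mem_univ, true_and] at hz1 hz2
      obtain ⟨u, hu, rfl⟩ := hz1
      obtain ⟨u', hu', he⟩ := hz2
      have h1 : u' = v := (Prod.ext_iff.mp he).1
      have h2 : v = u := (Prod.ext_iff.mp he).2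
      subst h1; subst h2
      exact hasym _ _ hu hu
  -- touch = Px ∪ Py
  set Px := Pall.filter (fun z => z.1 = x ∨ z.2 = x) with hPx
  set Py := Pall.filter (fun z => z.1 = y ∨ z.2 = y) with hPy
  have htPxPy : touch = Px ∪ Py := by
    ext z
    simp only [htouch, hPx, hPy, Finset.mem_union, Finset.mem_filter]
    tauto
  have hunion : touch.card + (Px ∩ Py).card = deg T x + deg T y := by
    rw [htPxPy, Finset.card_union_add_card_inter, hPv x, hPv y]
  have hinter : (Px ∩ Py).card = (if T.1 x y ∨ T.1 y x then 1 else 0) := by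
    by_cases h1 : T.1 x y
    · have h2 : ¬ T.1 y x := hasym _ _ h1
      have : Px ∩ Py = {(x, y)} := by
        ext z
        simp only [Finset.mem_inter, Finset.mem_filter, Finset.mem_singleton, hPx, hPy,
          hPall, Finset.mem_product, Finset.mem_univ, true_and]
        constructor
        · rintro ⟨⟨hr, hx1 | hx1⟩, ⟨-, hy1 | hy1⟩⟩
          · exact absurd (hx1 ▸ hy1 : x = y) hxy
          · exact Prod.ext hx1 hy1
          · exact absurd (show T.1 y x by rw [← hy1, ← hx1]; exact hr) h2
          · exact absurd (hx1 ▸ hy1 : x = y) hxy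
        · rintro rfl
          exact ⟨⟨h1, Or.inl rfl⟩, ⟨h1, Or.inr rfl⟩⟩
      rw [this]
      simp [h1]
    · by_cases h2 : T.1 y x
      · have : Px ∩ Py = {(y, x)} := by
          ext z
          simp only [Finset.mem_inter, Finset.mem_filter, Finset.mem_singleton, hPx, hPy,
            hPall, Finset.mem_product, Finset.mem_univ, true_and]
          constructor
          · rintro ⟨⟨hr, hx1 | hx1⟩, ⟨-, hy1 | hy1⟩⟩
            · exact absurd (hx1 ▸ hy1 : x = y) hxy
            · exact absurd (show T.1 x y by rw [← hx1, ← hy1]; exact hr) h1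
            · exact Prod.ext hy1 hx1
            · exact absurd (hx1 ▸ hy1 : x = y) hxy
          · rintro rfl
            exact ⟨⟨h2, Or.inr rfl⟩, ⟨h2, Or.inl rfl⟩⟩
        rw [this]
        simp [h1, h2]
      · have : Px ∩ Py = ∅ := by
          ext z
          simp only [Finset.notMem_empty, iff_false]
          intro hz
          simp only [Finset.mem_inter, Finset.mem_filter, hPx, hPy, hPall,
            Finset.mem_product, Finset.mem_univ, true_and] at hz
          obtain ⟨⟨hr, hx1 | hx1⟩, ⟨-, hy1 | hy1⟩⟩ := hz
          · exact hxy (hx1 ▸ hy1 : x = y)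
          · exact h1 (show T.1 x y by rw [← hx1, ← hy1]; exact hr)
          · exact h2 (show T.1 y x by rw [← hy1, ← hx1]; exact hr)
          · exact hxy (hx1 ▸ hy1 : x = y)
        rw [this]
        simp [h1, h2]
  rw [← h2] at h3
  rw [← hinter]
  omega

end Counting

section CoreHelpers

open Finset

variable {N k : ℕ} {T : FinSPO N} {p : FinSPO k}

theorem conv_univ : Conv T (univ : Finset (Fin N)) := fun _ _ _ _ z _ _ => mem_univ z

open Classical in
theorem conv_pair {x y : Fin N}
    (hx : ∀ a b : Fin N, a ≠ x → a ≠ y → b ≠ x → b ≠ y → T.1 a x → T.1 x b → False)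
    (hy : ∀ a b : Fin N, a ≠ x → a ≠ y → b ≠ x → b ≠ y → T.1 a y → T.1 y b → False) :
    Conv T (univ \ {x, y}) := by
  intro a ha b hb z h1 h2
  simp only [Finset.mem_sdiff, Finset.mem_univ, true_and, Finset.mem_insert,
    Finset.mem_singleton, not_or] at ha hb ⊢
  rcases Classical.em (z = x) with rfl | hzx
  · exact absurd (hx a b ha.1 ha.2 hb.1 hb.2 h1 h2) not_false
  · rcases Classical.em (z = y) with rfl | hzy
    · exact absurd (hy a b ha.1 ha.2 hb.1 hb.2 h1 h2) not_false
    · exact ⟨hzx, hzy⟩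

/-- edge counts agree between convex `k`-subsets -/
theorem Epairs_transfer (H : ∀ r : FinSPO k, RepConvex T.1 r → IsoFin r p)
    {S S' : Finset (Fin N)} (hS : Conv T S) (hS' : Conv T S')
    (hc : S.card = k) (hc' : S'.card = k) :
    Epairs T S = Epairs T S' := by
  classical
  obtain ⟨φ, hmaps, hinj, hsurj, hrel⟩ := iso_pair H hS hS' hc hc'
  unfold Epairs
  apply Finset.card_bij (fun z _ => (φ z.1, φ z.2))
  · rintro ⟨a, b⟩ hz
    simp only [Finset.mem_filter, Finset.mem_product] at hz ⊢
    exact ⟨⟨hmaps _ hz.1.1, hmaps _ hz.1.2⟩, (hrel _ hz.1.1 _ hz.1.2).mp hz.2⟩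
  · rintro ⟨a, b⟩ hz ⟨a', b'⟩ hz' he
    simp only [Finset.mem_filter, Finset.mem_product] at hz hz'
    have h1 := hinj (by exact_mod_cast hz.1.1) (by exact_mod_cast hz'.1.1) (Prod.ext_iff.mp he).1
    have h2 := hinj (by exact_mod_cast hz.1.2) (by exact_mod_cast hz'.1.2) (Prod.ext_iff.mp he).2
    exact Prod.ext h1 h2
  · rintro ⟨a', b'⟩ hz
    simp only [Finset.mem_filter, Finset.mem_product] at hz
    obtain ⟨a, ha, rfl⟩ := hsurj _ hz.1.1
    obtain ⟨b, hb, rfl⟩ := hsurj _ hz.1.2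
    refine ⟨(a, b), ?_, rfl⟩
    simp only [Finset.mem_filter, Finset.mem_product]
    exact ⟨⟨ha, hb⟩, (hrel _ ha _ hb).mpr hz.2⟩

/-- the opposite representative -/
def opSPO {n : ℕ} (q : FinSPO n) : FinSPO n :=
  ⟨fun a b => q.1 b a, fun _ _ _ h1 h2 => q.2.1 h2 h1, q.2.2⟩

theorem opSPO_H {n : ℕ} {T : FinSPO n} {p : FinSPO k}
    (H : ∀ r : FinSPO k, RepConvex T.1 r → IsoFin r p) :
    ∀ r : FinSPO k, RepConvex (opSPO T).1 r → IsoFin r (opSPO p) := by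
  intro r hr
  obtain ⟨g, hginj, hgconv, hgrel⟩ := hr
  have h1 : RepConvex T.1 (opSPO r) := by
    refine ⟨g, hginj, ?_, fun a b => hgrel b a⟩
    exact isConvexIn_flip.mp hgconv
  obtain ⟨e, he⟩ := H _ h1
  exact ⟨e, fun a b => he b a⟩

theorem opSPO_chain {n : ℕ} {q : FinSPO n} (h : IsChainRep (opSPO q)) : IsChainRep q :=
  fun a b hab => (h a b hab).symm

theorem opSPO_antichain {n : ℕ} {q : FinSPO n} (h : IsAntichainRep (opSPO q)) :
    IsAntichainRep q := fun a b hr => h b a hr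

theorem three_le_of_not_chain_antichain (hcp : ¬IsChainRep p) (hap : ¬IsAntichainRep p) :
    3 ≤ k := by
  classical
  unfold IsChainRep at hcp
  unfold IsAntichainRep at hap
  push_neg at hcp hap
  obtain ⟨a, b, hab, hpab, hpba⟩ := hcp
  obtain ⟨c, d, hcd⟩ := hap
  have hcd' : c ≠ d := fun he => p.2.2 c (he ▸ hcd)
  have hone : ∃ e : Fin k, e ≠ a ∧ e ≠ b := by
    rcases Classical.em (c = a) with rfl | hca
    · -- c = a
      refine ⟨d, fun he => hcd' he.symm, fun he => hpab (he ▸ hcd)⟩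
    · rcases Classical.em (c = b) with rfl | hcb
      · refine ⟨d, fun he => hpba (he ▸ hcd), fun he => hcd' he.symm⟩
      · exact ⟨c, hca, hcb⟩
  obtain ⟨e, hea, heb⟩ := hone
  have hcard : ({a, b, e} : Finset (Fin k)).card = 3 := by
    rw [Finset.card_insert_of_notMem (by simp [hab, hea.symm]),
      Finset.card_insert_of_notMem (by simp [heb.symm]), Finset.card_singleton]
  calc 3 = ({a, b, e} : Finset (Fin k)).card := hcard.symm
    _ ≤ (univ : Finset (Fin k)).card := Finset.card_le_univ _
    _ = k := by simp

end CoreHelpers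

section Cases

open Finset

variable {k : ℕ} {p : FinSPO k} {T : FinSPO (k + 2)}

open Classical in
/-- main case: two maximals, two minimals, suitably distinct -/
theorem mainCase (H : ∀ r : FinSPO k, RepConvex T.1 r → IsoFin r p)
    {x0 x1 y0 y1 : Fin (k + 2)}
    (hx0 : ∀ u, ¬ T.1 x0 u) (hx1 : ∀ u, ¬ T.1 x1 u)
    (hy0 : ∀ u, ¬ T.1 u y0) (hy1 : ∀ u, ¬ T.1 u y1)
    (hx01 : x0 ≠ x1) (hy01 : y0 ≠ y1) (hx1y1 : x1 ≠ y1)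
    (hr0 : T.1 y0 x0) : False := by
  have hx0y0 : x0 ≠ y0 := fun he => T.2.2 y0 (he ▸ hr0)
  have hx0y1 : x0 ≠ y1 := fun he => hy1 y0 (he ▸ hr0)
  have hx1y0 : x1 ≠ y0 := fun he => hx1 x0 (he ▸ hr0)
  -- the four convex k-subsets
  have hcard : ∀ a b : Fin (k + 2), a ≠ b → (univ \ {a, b}).card = k := by
    intro a b hab
    rw [Finset.card_sdiff_of_subset (by simp)]
    simp [Finset.card_insert_of_notMem, hab]
  have cmax : ∀ a b : Fin (k + 2), (∀ u, ¬ T.1 a u) → (∀ u, ¬ T.1 u b) →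
      Conv T (univ \ {a, b}) := by
    intro a b ha hb
    apply conv_pair
    · intro s t _ _ _ _ _ h2; exact ha t h2
    · intro s t _ _ _ _ h1 _; exact hb s h1
  have cmaxmax : ∀ a b : Fin (k + 2), (∀ u, ¬ T.1 a u) → (∀ u, ¬ T.1 b u) →
      Conv T (univ \ {a, b}) := by
    intro a b ha hb
    apply conv_pair
    · intro s t _ _ _ _ _ h2; exact ha t h2
    · intro s t _ _ _ _ _ h2; exact hb t h2
  have cminmin : ∀ a b : Fin (k + 2), (∀ u, ¬ T.1 u a) → (∀ u, ¬ T.1 u b) →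
      Conv T (univ \ {a, b}) := by
    intro a b ha hb
    apply conv_pair
    · intro s t _ _ _ _ h1 _; exact ha s h1
    · intro s t _ _ _ _ h1 _; exact hb s h1
  have h1 := count_remove T hx01
  have h2 := count_remove T hy01
  have h3 := count_remove T hx0y0
  have h4 := count_remove T hx1y1
  -- χ values
  have hch1 : ¬(T.1 x0 x1 ∨ T.1 x1 x0) := by rintro (h | h); exacts [hx0 _ h, hx1 _ h]
  have hch2 : ¬(T.1 y0 y1 ∨ T.1 y1 y0) := by rintro (h | h); exacts [hy1 _ h, hy0 _ h]
  have hch3 : T.1 x0 y0 ∨ T.1 y0 x0 := Or.inr hr0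
  rw [if_neg hch1] at h1
  rw [if_neg hch2] at h2
  rw [if_pos hch3] at h3
  -- all Epairs equal
  have e1 := Epairs_transfer H (cmaxmax _ _ hx0 hx1) (cminmin _ _ hy0 hy1)
    (hcard _ _ hx01) (hcard _ _ hy01)
  have e2 := Epairs_transfer H (cmaxmax _ _ hx0 hx1) (cmax _ _ hx0 hy0)
    (hcard _ _ hx01) (hcard _ _ hx0y0)
  have e3 := Epairs_transfer H (cmaxmax _ _ hx0 hx1) (cmax _ _ hx1 hy1)
    (hcard _ _ hx01) (hcard _ _ hx1y1)
  rcases Classical.em (T.1 x1 y1 ∨ T.1 y1 x1) with hc | hc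
  · rw [if_pos hc] at h4; omega
  · rw [if_neg hc] at h4; omega

open Classical in
/-- degenerate case: `M = {x0, z}`, `m = {y0, z}` with `z` isolated -/
theorem degenCase (H : ∀ r : FinSPO k, RepConvex T.1 r → IsoFin r p) (hk3 : 3 ≤ k)
    {x0 y0 z : Fin (k + 2)}
    (hx0 : ∀ u, ¬ T.1 x0 u) (hy0 : ∀ u, ¬ T.1 u y0)
    (hzmax : ∀ u, ¬ T.1 z u) (hzmin : ∀ u, ¬ T.1 u z)
    (hx0z : x0 ≠ z) (hy0z : y0 ≠ z)
    (hMuniq : ∀ x, (∀ u, ¬ T.1 x u) → x = x0 ∨ x = z)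
    (hmuniq : ∀ y, (∀ u, ¬ T.1 u y) → y = y0 ∨ y = z)
    (hr0 : T.1 y0 x0) : False := by
  have hx0y0 : x0 ≠ y0 := fun he => T.2.2 y0 (he ▸ hr0)
  have hcard : ∀ a b : Fin (k + 2), a ≠ b → (univ \ {a, b}).card = k := by
    intro a b hab
    rw [Finset.card_sdiff_of_subset (by simp)]
    simp [Finset.card_insert_of_notMem, hab]
  -- x0 is above everything except z
  have hx0top : ∀ v : Fin (k + 2), v ≠ x0 → v ≠ z → T.1 v x0 := by
    intro v hv hvz
    -- find a maximal element above v
    have hW : ({w : Fin (k + 2) | w = v ∨ T.1 v w}).Finite := Set.toFinite _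
    obtain ⟨w, hwW, hwmax⟩ := exists_rel_max T.2.1 T.2.2 hW ⟨v, Or.inl rfl⟩
    have hwM : ∀ u, ¬ T.1 w u := by
      intro u hu
      apply hwmax u _ hu
      rcases hwW with rfl | hw
      · exact Or.inr hu
      · exact Or.inr (T.2.1 hw hu)
    rcases hMuniq w hwM with rfl | rfl
    · rcases hwW with rfl | hw
      · exact absurd rfl hv
      · exact hw
    · rcases hwW with rfl | hw
      · exact absurd rfl hvz
      · exact absurd hw (hzmin v)
  -- deg x0 = k, deg z = 0
  have hdz : deg T z = 0 := by
    unfold deg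
    rw [Finset.card_eq_zero]
    ext u
    simp only [Finset.mem_filter, Finset.mem_univ, true_and, Finset.notMem_empty, iff_false]
    rintro (h | h)
    exacts [hzmin u h, hzmax u h]
  have h1 := count_remove T hx0z
  have h2 := count_remove T hy0z
  have h3 := count_remove T hx0y0
  have hc1 : ¬(T.1 x0 z ∨ T.1 z x0) := by rintro (h | h); exacts [hx0 _ h, hzmax _ h]
  have hc2 : ¬(T.1 y0 z ∨ T.1 z y0) := by rintro (h | h); exacts [hzmin _ h, hy0 _ h]
  have hc3 : T.1 x0 y0 ∨ T.1 y0 x0 := Or.inr hr0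
  rw [if_neg hc1] at h1
  rw [if_neg hc2] at h2
  rw [if_pos hc3] at h3
  have cv1 : Conv T (univ \ {x0, z}) := by
    apply conv_pair
    · intro s t _ _ _ _ _ h; exact hx0 t h
    · intro s t _ _ _ _ _ h; exact hzmax t h
  have cv2 : Conv T (univ \ {y0, z}) := by
    apply conv_pair
    · intro s t _ _ _ _ h _; exact hy0 s h
    · intro s t _ _ _ _ h _; exact hy0 s (T.2.1 h (by exact absurd h (hzmin s)) )
  have cv3 : Conv T (univ \ {x0, y0}) := by
    apply conv_pair
    · intro s t _ _ _ _ _ h; exact hx0 t h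
    · intro s t _ _ _ _ h _; exact hy0 s h
  have e1 := Epairs_transfer H cv1 cv2 (hcard _ _ hx0z) (hcard _ _ hy0z)
  have e2 := Epairs_transfer H cv1 cv3 (hcard _ _ hx0z) (hcard _ _ hx0y0)
  -- deg x0 ≥ k : x0 is comparable to everything except z
  have hdx0 : k ≤ deg T x0 := by
    have hsub : univ \ {x0, z} ⊆ univ.filter (fun u => T.1 u x0 ∨ T.1 x0 u) := by
      intro u hu
      simp only [Finset.mem_sdiff, Finset.mem_univ, true_and, Finset.mem_insert,
        Finset.mem_singleton, not_or] at hu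
      simp only [Finset.mem_filter, Finset.mem_univ, true_and]
      exact Or.inl (hx0top u hu.1 hu.2)
    calc k = (univ \ {x0, z}).card := (hcard _ _ hx0z).symm
      _ ≤ _ := Finset.card_le_card hsub
      _ = deg T x0 := rfl
  -- degrees equal
  have hdy0 : deg T x0 = deg T y0 := by omega
  omega

end Cases

section Cases2

open Finset

variable {k : ℕ} {p : FinSPO k} {T : FinSPO (k + 2)}

theorem card_sdiff_pair {a b : Fin (k + 2)} (hab : a ≠ b) :
    ((univ : Finset (Fin (k+2))) \ {a, b}).card = k := by
  classical
  rw [Finset.card_sdiff_of_subset (by simp)]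
  simp [Finset.card_insert_of_notMem, hab]

open Classical in
/-- unique maximal element, at least two minimal elements -/
theorem caseUM (H : ∀ r : FinSPO k, RepConvex T.1 r → IsoFin r p) (hk3 : 3 ≤ k)
    {xh y1 y2 : Fin (k + 2)}
    (hmaxall : ∀ v, v ≠ xh → T.1 v xh)
    (hy1 : ∀ u, ¬ T.1 u y1) (hy2 : ∀ u, ¬ T.1 u y2) (hy12 : y1 ≠ y2) : False := by
  have htr := T.2.1
  have hirr := T.2.2
  have hasym : ∀ a b : Fin (k+2), T.1 a b → ¬ T.1 b a := fun a b h => rel_asymm htr hirr h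
  have hxhmax : ∀ u, ¬ T.1 xh u := by
    intro u hu
    have hne : u ≠ xh := fun he => hirr xh (he ▸ hu)
    exact hasym _ _ hu (hmaxall u hne)
  have hy1xh : y1 ≠ xh := by
    intro he
    subst he
    exact hy1 y2 (hmaxall y2 (fun h => hy12 h.symm))
  have hy2xh : y2 ≠ xh := by
    intro he
    subst he
    exact hy2 y1 (hmaxall y1 hy12)
  -- degree of xh is k+1
  have hdxh : deg T xh = k + 1 := by
    unfold deg
    have : univ.filter (fun u => T.1 u xh ∨ T.1 xh u) = univ.erase xh := by
      ext u
      simp only [Finset.mem_filter, Finset.mem_univ, true_and, Finset.mem_erase, and_true]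
      constructor
      · rintro (h | h) <;> exact fun he => hirr xh (he ▸ h)
      · intro hu; exact Or.inl (hmaxall u hu)
    rw [this, Finset.card_erase_of_mem (mem_univ _)]
    simp
  -- the three removable pairs
  have cva : Conv T (univ \ {y1, y2}) := by
    apply conv_pair
    · intro s t _ _ _ _ h _; exact hy1 s h
    · intro s t _ _ _ _ h _; exact hy2 s h
  have cvb : Conv T (univ \ {xh, y1}) := by
    apply conv_pair
    · intro s t _ _ _ _ _ h; exact hxhmax t h
    · intro s t _ _ _ _ h _; exact hy1 s h
  have cvc : Conv T (univ \ {xh, y2}) := by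
    apply conv_pair
    · intro s t _ _ _ _ _ h; exact hxhmax t h
    · intro s t _ _ _ _ h _; exact hy2 s h
  have h1 := count_remove T (show xh ≠ y1 from fun he => hy1xh he.symm)
  have h2 := count_remove T (show xh ≠ y2 from fun he => hy2xh he.symm)
  have h3 := count_remove T hy12
  rw [if_pos (Or.inr (hmaxall y1 hy1xh))] at h1
  rw [if_pos (Or.inr (hmaxall y2 hy2xh))] at h2
  rw [if_neg (show ¬(T.1 y1 y2 ∨ T.1 y2 y1) by rintro (h | h); exacts [hy2 _ h, hy1 _ h])] at h3
  have e1 := Epairs_transfer H cvb cvc (card_sdiff_pair (fun he => hy1xh he.symm))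
    (card_sdiff_pair (fun he => hy2xh he.symm))
  have e2 := Epairs_transfer H cvb cva (card_sdiff_pair (fun he => hy1xh he.symm))
    (card_sdiff_pair hy12)
  have hdy1 : deg T y1 = k := by omega
  -- y1 is comparable to everything except y2
  have hy1comp : ∀ u : Fin (k + 2), u ≠ y1 → u ≠ y2 → T.1 y1 u := by
    intro u hu1 hu2
    -- incomparable set of y1 has card 1 and contains y2
    have hpart : (univ.filter (fun u : Fin (k+2) => u = y1 ∨ T.1 u y1 ∨ T.1 y1 u)).card = k + 1 := by
      have : univ.filter (fun u : Fin (k+2) => u = y1 ∨ T.1 u y1 ∨ T.1 y1 u) =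
          insert y1 (univ.filter (fun u => T.1 u y1 ∨ T.1 y1 u)) := by
        ext v
        simp only [Finset.mem_filter, Finset.mem_univ, true_and, Finset.mem_insert]
      rw [this, Finset.card_insert_of_notMem (by simp [hirr y1])]
      have : (univ.filter (fun u => T.1 u y1 ∨ T.1 y1 u)).card = deg T y1 := rfl
      omega
    have hneg : (univ.filter (fun u : Fin (k+2) => ¬(u = y1 ∨ T.1 u y1 ∨ T.1 y1 u))).card = 1 := by
      have := Finset.card_filter_add_card_filter_not
        (s := (univ : Finset (Fin (k+2)))) (fun u : Fin (k+2) => u = y1 ∨ T.1 u y1 ∨ T.1 y1 u)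
      rw [hpart] at this
      simp only [Finset.card_univ, Fintype.card_fin] at this
      omega
    obtain ⟨w, hw⟩ := Finset.card_eq_one.mp hneg
    have hy2w : y2 ∈ univ.filter (fun u : Fin (k+2) => ¬(u = y1 ∨ T.1 u y1 ∨ T.1 y1 u)) := by
      simp only [Finset.mem_filter, Finset.mem_univ, true_and, not_or]
      exact ⟨fun he => hy12 he.symm, fun h => hy1 _ h, fun h => hy2 _ h⟩
    rw [hw, Finset.mem_singleton] at hy2w
    subst hy2w
    by_contra hcon
    have hu : u ∈ univ.filter (fun v : Fin (k+2) => ¬(v = y1 ∨ T.1 v y1 ∨ T.1 y1 v)) := by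
      simp only [Finset.mem_filter, Finset.mem_univ, true_and, not_or]
      exact ⟨hu1, fun h => hy1 _ h, hcon⟩
    rw [hw, Finset.mem_singleton] at hu
    exact hu2 hu
  -- S_a has a maximum, hence so does S_b
  obtain ⟨φ, hmaps, hinj, hsurj, hrel⟩ := iso_pair H cva cvb (card_sdiff_pair hy12)
    (card_sdiff_pair (fun he => hy1xh he.symm))
  have hxhSa : xh ∈ univ \ ({y1, y2} : Finset (Fin (k+2))) := by
    simp only [Finset.mem_sdiff, Finset.mem_univ, true_and, Finset.mem_insert,
      Finset.mem_singleton, not_or]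
    exact ⟨fun h => hy1xh h.symm, fun h => hy2xh h.symm⟩
  set u := φ xh with hu
  have huSb : u ∈ univ \ ({xh, y1} : Finset (Fin (k+2))) := hmaps _ hxhSa
  have humax : ∀ v ∈ univ \ ({xh, y1} : Finset (Fin (k+2))), v ≠ u → T.1 v u := by
    intro v hv hvu
    obtain ⟨w, hw, rfl⟩ := hsurj v hv
    have hwxh : w ≠ xh := fun he => hvu (by rw [he])
    exact (hrel w hw xh hxhSa).mp (hmaxall w hwxh)
  -- u is not y2, not xh, not y1
  have huxh : u ≠ xh := by
    intro he
    simp only [Finset.mem_sdiff, Finset.mem_univ, true_and, Finset.mem_insert,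
      Finset.mem_singleton, not_or] at huSb
    exact huSb.1 he
  have huy1 : u ≠ y1 := by
    intro he
    simp only [Finset.mem_sdiff, Finset.mem_univ, true_and, Finset.mem_insert,
      Finset.mem_singleton, not_or] at huSb
    exact huSb.2 he
  have huy2 : u ≠ y2 := by
    intro he
    -- then y2 would be above some element of S_b
    -- pick v ∈ S_b with v ∉ {u}: card S_b = k ≥ 3
    have hcb : ((univ : Finset (Fin (k+2))) \ {xh, y1}).card = k :=
      card_sdiff_pair (fun h => hy1xh h.symm)
    have : 1 < ((univ : Finset (Fin (k+2))) \ {xh, y1}).card := by omega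
    obtain ⟨v, hv, hvu⟩ := Finset.exists_mem_ne this u
    exact hy2 v (he ▸ humax v hv hvu)
  -- u is comparable to everything
  have hdegu : k + 1 ≤ deg T u := by
    have hsub : univ.erase u ⊆ univ.filter (fun v => T.1 v u ∨ T.1 u v) := by
      intro v hv
      rw [Finset.mem_erase] at hv
      simp only [Finset.mem_filter, Finset.mem_univ, true_and]
      rcases Classical.em (v = xh) with rfl | hvxh
      · exact Or.inr (hmaxall u huxh)
      · rcases Classical.em (v = y1) with rfl | hvy1
        · exact Or.inl (hy1comp u huy1 huy2)
        · refine Or.inl (humax v ?_ hv.1)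
          simp [Finset.mem_sdiff, hvxh, hvy1]
    calc k + 1 = (univ.erase u).card := by
          rw [Finset.card_erase_of_mem (mem_univ _)]; simp
      _ ≤ _ := Finset.card_le_card hsub
      _ = deg T u := rfl
  -- {xh, u} is a removable pair
  have cvd : Conv T (univ \ {xh, u}) := by
    apply conv_pair
    · intro s t _ _ _ _ _ h; exact hxhmax t h
    · intro s t hsx hsu htx htu h1 h2
      -- t is above u, t ∉ {xh, u}
      rcases Classical.em (t = y1) with rfl | hty1
      · exact hy1 u h2
      · have htSb : t ∈ univ \ ({xh, y1} : Finset (Fin (k+2))) := by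
          simp [Finset.mem_sdiff, htx, hty1]
        exact hasym _ _ h2 (humax t htSb htu)
  have h4 := count_remove T (show xh ≠ u from fun he => huxh he.symm)
  rw [if_pos (Or.inr (hmaxall u huxh))] at h4
  have e3 := Epairs_transfer H cvb cvd (card_sdiff_pair (fun he => hy1xh he.symm))
    (card_sdiff_pair (fun he => huxh he.symm))
  -- h1 : E_b + deg xh + deg y1 = E + 1 with deg xh = k+1, deg y1 = k
  -- h4 : E_d + deg xh + deg u = E + 1 with E_d = E_b  ⇒ deg u = k, contradiction
  omega

end Cases2

section Cases3

open Finset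

variable {k : ℕ} {p : FinSPO k} {T : FinSPO (k + 2)}

open Classical in
theorem deg_eq_of_comp_all {w : Fin (k + 2)} (h : ∀ v, v ≠ w → T.1 v w ∨ T.1 w v) :
    deg T w = k + 1 := by
  unfold deg
  have : univ.filter (fun u => T.1 u w ∨ T.1 w u) = univ.erase w := by
    ext u
    simp only [Finset.mem_filter, Finset.mem_univ, true_and, Finset.mem_erase, and_true]
    constructor
    · rintro (h' | h') <;> exact fun he => T.2.2 w (he ▸ h')
    · exact h u
  rw [this, Finset.card_erase_of_mem (mem_univ _)]
  simp

open Classical in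
theorem comp_all_of_deg {w : Fin (k + 2)} (h : k + 1 ≤ deg T w) :
    ∀ v, v ≠ w → T.1 v w ∨ T.1 w v := by
  have hsub : univ.filter (fun u => T.1 u w ∨ T.1 w u) ⊆ univ.erase w := by
    intro u hu
    simp only [Finset.mem_filter, Finset.mem_univ, true_and] at hu
    rw [Finset.mem_erase]
    rcases hu with h' | h' <;> exact ⟨fun he => T.2.2 w (he ▸ h'), mem_univ _⟩
  have hcard : (univ.erase w).card ≤ (univ.filter (fun u => T.1 u w ∨ T.1 w u)).card := by
    rw [Finset.card_erase_of_mem (mem_univ _)]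
    exact le_trans (by simp) h
  have := Finset.eq_of_subset_of_card_le hsub hcard
  intro v hv
  have : v ∈ univ.filter (fun u => T.1 u w ∨ T.1 w u) := by
    rw [this, Finset.mem_erase]; exact ⟨hv, mem_univ _⟩
  simpa using this

open Classical in
/-- unique maximal and unique minimal element: the pumping argument -/
theorem caseBoth (H : ∀ r : FinSPO k, RepConvex T.1 r → IsoFin r p)
    (hcp : ¬IsChainRep p) (hk3 : 3 ≤ k) {xh yh : Fin (k + 2)}
    (hmaxall : ∀ v, v ≠ xh → T.1 v xh)
    (hminall : ∀ v, v ≠ yh → T.1 yh v) : False := by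
  have htr := T.2.1
  have hirr := T.2.2
  have hasym : ∀ a b : Fin (k+2), T.1 a b → ¬ T.1 b a := fun a b h => rel_asymm htr hirr h
  have hxhmax : ∀ u, ¬ T.1 xh u := by
    intro u hu
    exact hasym _ _ hu (hmaxall u (fun he => hirr xh (he ▸ hu)))
  have hyhmin : ∀ u, ¬ T.1 u yh := by
    intro u hu
    exact hasym _ _ hu (hminall u (fun he => hirr yh (he ▸ hu)))
  have hcu : (univ : Finset (Fin (k+2))).card = k + 2 := by simp
  have hxhyh : xh ≠ yh := by
    intro he
    obtain ⟨v, _, hv⟩ := Finset.exists_mem_ne (by omega : 1 < (univ : Finset (Fin (k+2))).card) xh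
    exact hxhmax v (he ▸ hminall v (he ▸ hv))
  have hdxh : deg T xh = k + 1 := deg_eq_of_comp_all (fun v hv => Or.inl (hmaxall v hv))
  have hdyh : deg T yh = k + 1 := deg_eq_of_comp_all (fun v hv => Or.inr (hminall v hv))
  -- base removable pair {xh, yh}
  have cv0 : Conv T (univ \ {xh, yh}) := by
    apply conv_pair
    · intro s t _ _ _ _ _ h; exact hxhmax t h
    · intro s t _ _ _ _ h _; exact hyhmin s h
  have h0 := count_remove T hxhyh
  rw [if_pos (Or.inr (hminall xh hxhyh))] at h0
  -- second maximal element x2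
  obtain ⟨x2, hx2W, hx2max'⟩ := exists_rel_max htr hirr
    (Set.toFinite {v : Fin (k+2) | v ≠ xh}) ⟨yh, fun he => hxhyh he.symm⟩
  have hx2xh : x2 ≠ xh := hx2W
  have hx2up : ∀ v, T.1 x2 v → v = xh := by
    intro v hv
    by_contra hne
    exact hx2max' v hne hv
  -- second minimal element y2
  obtain ⟨y2, hy2W, hy2min'⟩ := exists_rel_min htr hirr
    (Set.toFinite {v : Fin (k+2) | v ≠ yh}) ⟨xh, hxhyh⟩
  have hy2yh : y2 ≠ yh := hy2W
  have hy2low : ∀ v, T.1 v y2 → v = yh := by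
    intro v hv
    by_contra hne
    exact hy2min' v hne hv
  -- removable pairs {xh, x2} and {yh, y2}
  have cv1 : Conv T (univ \ {xh, x2}) := by
    apply conv_pair
    · intro s t _ _ _ _ _ h; exact hxhmax t h
    · intro s t _ _ htx _ _ h; exact htx (hx2up t h)
  have cv3 : Conv T (univ \ {yh, y2}) := by
    apply conv_pair
    · intro s t _ _ _ _ h _; exact hyhmin s h
    · intro s t hsy _ _ _ h _; exact hsy (hy2low s h)
  have h1 := count_remove T (show xh ≠ x2 from fun he => hx2xh he.symm)
  rw [if_pos (Or.inr (hmaxall x2 hx2xh))] at h1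
  have h3 := count_remove T (show yh ≠ y2 from fun he => hy2yh he.symm)
  rw [if_pos (Or.inl (hminall y2 hy2yh))] at h3
  have e01 := Epairs_transfer H cv0 cv1 (card_sdiff_pair hxhyh)
    (card_sdiff_pair (fun he => hx2xh he.symm))
  have e03 := Epairs_transfer H cv0 cv3 (card_sdiff_pair hxhyh)
    (card_sdiff_pair (fun he => hy2yh he.symm))
  have hdx2 : deg T x2 = k + 1 := by omega
  have hdy2 : deg T y2 = k + 1 := by omega
  have hx2comp : ∀ v, v ≠ x2 → T.1 v x2 ∨ T.1 x2 v := comp_all_of_deg (le_of_eq hdx2.symm)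
  have hy2comp : ∀ v, v ≠ y2 → T.1 v y2 ∨ T.1 y2 v := comp_all_of_deg (le_of_eq hdy2.symm)
  -- x2 is the maximum of T \ {xh},  y2 the minimum of T \ {yh}
  have hx2max : ∀ v, v ≠ xh → v ≠ x2 → T.1 v x2 := by
    intro v hvx hvx2
    rcases hx2comp v hvx2 with h | h
    · exact h
    · exact absurd (hx2up v h) hvx
  have hy2min : ∀ v, v ≠ yh → v ≠ y2 → T.1 y2 v := by
    intro v hvy hvy2
    rcases hy2comp v hvy2 with h | h
    · exact absurd (hy2low v h) hvy
    · exact h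
  -- distinctness
  have hx2yh : x2 ≠ yh := by
    intro he
    obtain ⟨v, hv⟩ := Finset.card_pos.mp
      (show 0 < ((univ : Finset (Fin (k+2))) \ {xh, x2}).card by rw [card_sdiff_pair (fun h => hx2xh h.symm)]; omega)
    simp only [Finset.mem_sdiff, Finset.mem_univ, true_and, Finset.mem_insert,
      Finset.mem_singleton, not_or] at hv
    exact hyhmin v (he ▸ hx2max v hv.1 hv.2)
  have hy2xh : y2 ≠ xh := by
    intro he
    obtain ⟨v, hv⟩ := Finset.card_pos.mp
      (show 0 < ((univ : Finset (Fin (k+2))) \ {yh, y2}).card by rw [card_sdiff_pair (fun h => hy2yh h.symm)]; omega)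
    simp only [Finset.mem_sdiff, Finset.mem_univ, true_and, Finset.mem_insert,
      Finset.mem_singleton, not_or] at hv
    exact hxhmax v (he ▸ hy2min v hv.1 hv.2)
  have hx2y2 : x2 ≠ y2 := by
    intro he
    have hc : 0 < ((univ : Finset (Fin (k+2))) \ {xh, yh, x2}).card := by
      have : ({xh, yh, x2} : Finset (Fin (k+2))).card ≤ 3 := by
        apply le_trans (Finset.card_insert_le _ _)
        simp [Finset.card_insert_le]
        have := Finset.card_insert_le yh ({x2} : Finset (Fin (k+2)))
        simp at this ⊢
        omega
      have h2 := Finset.le_card_sdiff ({xh, yh, x2} : Finset (Fin (k+2))) univ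
      rw [Finset.card_sdiff_of_subset (Finset.subset_univ _)]
      rw [hcu]
      omega
    obtain ⟨v, hv⟩ := Finset.card_pos.mp hc
    simp only [Finset.mem_sdiff, Finset.mem_univ, true_and, Finset.mem_insert,
      Finset.mem_singleton, not_or] at hv
    have hvy2 : v ≠ y2 := fun h2 => hv.2.2 (h2.trans he.symm)
    exact hasym _ _ (hx2max v hv.1 hv.2.2) (he ▸ hy2min v hv.2.1 (he ▸ hvy2))
  -- the comparable-to-all set Q
  set Q : Finset (Fin (k+2)) :=
    univ.filter (fun v => ∀ u, u ≠ v → T.1 u v ∨ T.1 v u) with hQ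
  have hxhQ : xh ∈ Q := by
    simp only [hQ, Finset.mem_filter, Finset.mem_univ, true_and]
    exact fun u hu => Or.inl (hmaxall u hu)
  have hyhQ : yh ∈ Q := by
    simp only [hQ, Finset.mem_filter, Finset.mem_univ, true_and]
    exact fun u hu => Or.inr (hminall u hu)
  have hx2Q : x2 ∈ Q := by
    simp only [hQ, Finset.mem_filter, Finset.mem_univ, true_and]
    exact fun u hu => hx2comp u hu
  have hy2Q : y2 ∈ Q := by
    simp only [hQ, Finset.mem_filter, Finset.mem_univ, true_and]
    exact fun u hu => hy2comp u hu
  set R : Finset (Fin (k+2)) := univ \ Q with hR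
  rcases Finset.eq_empty_or_nonempty R with hRe | hRne
  · -- T is a total order: p is a chain
    have hall : ∀ v : Fin (k+2), v ∈ Q := by
      intro v
      by_contra hv
      have : v ∈ R := by rw [hR, Finset.mem_sdiff]; exact ⟨mem_univ _, hv⟩
      rw [hRe] at this
      exact absurd this (Finset.notMem_empty v)
    apply hcp
    refine chain_transfer H cv1 (card_sdiff_pair (fun he => hx2xh he.symm)) ?_
    intro a _ b _ hab
    have := hall b
    simp only [hQ, Finset.mem_filter, Finset.mem_univ, true_and] at this
    exact this a hab
  · -- pumping
    obtain ⟨φ, hmaps, hinj, hsurj, hrel⟩ := iso_pair H cv1 cv3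
      (card_sdiff_pair (fun he => hx2xh he.symm)) (card_sdiff_pair (fun he => hy2yh he.symm))
    set C1 : Finset (Fin (k+2)) := univ \ {xh, x2} with hC1
    set C3 : Finset (Fin (k+2)) := univ \ {yh, y2} with hC3
    have hmemC1 : ∀ v : Fin (k+2), v ∈ C1 ↔ (v ≠ xh ∧ v ≠ x2) := by
      intro v
      simp [hC1, Finset.mem_sdiff, not_or]
    have hmemC3 : ∀ v : Fin (k+2), v ∈ C3 ↔ (v ≠ yh ∧ v ≠ y2) := by
      intro v
      simp [hC3, Finset.mem_sdiff, not_or]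
    have hmemQ : ∀ v : Fin (k+2), v ∈ Q ↔ ∀ u, u ≠ v → T.1 u v ∨ T.1 v u := by
      intro v; simp [hQ]
    have hRC1 : ∀ v ∈ R, v ∈ C1 := by
      intro v hv
      rw [hR, Finset.mem_sdiff] at hv
      rw [hmemC1]
      exact ⟨fun he => hv.2 (he ▸ hxhQ), fun he => hv.2 (he ▸ hx2Q)⟩
    have hRC3 : ∀ v ∈ R, v ∈ C3 := by
      intro v hv
      rw [hR, Finset.mem_sdiff] at hv
      rw [hmemC3]
      exact ⟨fun he => hv.2 (he ▸ hyhQ), fun he => hv.2 (he ▸ hy2Q)⟩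
    -- Claim A
    have claimA : ∀ v ∈ C1, (v ∈ Q ↔ φ v ∈ Q) := by
      intro v hv
      constructor
      · intro hvQ
        rw [hmemQ]
        intro u hu
        rcases Classical.em (u = yh) with rfl | huyh
        · exact Or.inl (hminall _ ((hmemC3 (φ v)).mp (hmaps v hv)).1)
        · rcases Classical.em (u = y2) with rfl | huy2
          · have h3' := (hmemC3 (φ v)).mp (hmaps v hv)
            exact Or.inl (hy2min _ h3'.1 h3'.2)
          · have huC3 : u ∈ C3 := (hmemC3 u).mpr ⟨huyh, huy2⟩
            obtain ⟨w, hw, rfl⟩ := hsurj u huC3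
            have hwv : w ≠ v := fun he => hu (by rw [he])
            rw [hmemQ] at hvQ
            rcases hvQ w hwv with h | h
            · exact Or.inl ((hrel w hw v hv).mp h)
            · exact Or.inr ((hrel v hv w hw).mp h)
      · intro hvQ
        by_contra hcon
        rw [hmemQ] at hcon
        push_neg at hcon
        obtain ⟨u, hu, hi1, hi2⟩ := hcon
        have huC1 : u ∈ C1 := by
          rw [hmemC1]
          constructor
          · intro he
            subst he
            exact hi2 (hmaxall v ((hmemC1 v).mp hv).1)
          · intro he
            subst he
            rcases hx2comp v (fun he2 => hu he2.symm) with h | h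
            · exact hi2 h
            · exact hi1 h
        have := (hmemQ (φ v)).mp hvQ (φ u) (fun he => hu (hinj (by exact_mod_cast huC1) (by exact_mod_cast hv) he))
        rcases this with h | h
        · exact hi1 ((hrel u huC1 v hv).mpr h)
        · exact hi2 ((hrel v hv u huC1).mpr h)
    -- the count of Q-elements below v
    set L : Fin (k+2) → ℕ := fun v => (Q.filter (fun q => T.1 q v)).card with hL
    -- Claim C : bound
    have claimC : ∀ v ∈ R, L v ≤ k := by
      intro v hv
      have hsub : Q.filter (fun q => T.1 q v) ⊆ C1 := by
        intro q hq
        simp only [Finset.mem_filter] at hq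
        rw [hmemC1]
        constructor
        · intro he; exact hxhmax v (he ▸ hq.2)
        · intro he
          have h5 := hx2up v (he ▸ hq.2)
          have hv' := hv
          rw [hR, Finset.mem_sdiff] at hv'
          exact hv'.2 (h5 ▸ hxhQ)
      calc L v ≤ C1.card := Finset.card_le_card hsub
        _ = k := card_sdiff_pair (fun he => hx2xh he.symm)
    -- φ maps R to R
    have hphiR : ∀ r ∈ R, φ r ∈ R := by
      intro r hr
      rw [hR, Finset.mem_sdiff]
      refine ⟨mem_univ _, ?_⟩
      intro hQ'
      have hr' := hr
      rw [hR, Finset.mem_sdiff] at hr'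
      exact hr'.2 ((claimA r (hRC1 r hr)).mpr hQ')
    -- Claim B : L (φ r) = L r + 2
    have claimB : ∀ r ∈ R, L (φ r) = L r + 2 := by
      intro r hr
      have hrC1 : r ∈ C1 := hRC1 r hr
      have hineq : Q.filter (fun q => T.1 q (φ r)) =
          ((Q.filter (fun q => T.1 q r)).image φ) ∪ {yh, y2} := by
        ext q'
        simp only [Finset.mem_union, Finset.mem_image, Finset.mem_filter, Finset.mem_insert,
          Finset.mem_singleton]
        constructor
        · rintro ⟨hq'Q, hq'rel⟩
          rcases Classical.em (q' = yh) with rfl | h1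
          · exact Or.inr (Or.inl rfl)
          · rcases Classical.em (q' = y2) with rfl | h2
            · exact Or.inr (Or.inr rfl)
            · have hq'C3 : q' ∈ C3 := (hmemC3 q').mpr ⟨h1, h2⟩
              obtain ⟨w, hw, rfl⟩ := hsurj q' hq'C3
              refine Or.inl ⟨w, ⟨(claimA w hw).mpr hq'Q, ?_⟩, rfl⟩
              exact (hrel w hw r hrC1).mpr hq'rel
        · rintro (⟨w, ⟨hwQ, hwrel⟩, rfl⟩ | rfl | rfl)
          · have hwC1 : w ∈ C1 := by
              rw [hmemC1]
              constructor
              · intro he; exact hxhmax r (he ▸ hwrel)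
              · intro he
                have h5 := hx2up r (he ▸ hwrel)
                have hr' := hr
                rw [hR, Finset.mem_sdiff] at hr'
                exact hr'.2 (h5 ▸ hxhQ)
            exact ⟨(claimA w hwC1).mp hwQ, (hrel w hwC1 r hrC1).mp hwrel⟩
          · exact ⟨hyhQ, hminall _ ((hmemC3 (φ r)).mp (hmaps r hrC1)).1⟩
          · have h3 := (hmemC3 (φ r)).mp (hmaps r hrC1)
            exact ⟨hy2Q, hy2min _ h3.1 h3.2⟩
      have hQfilterC1 : Q.filter (fun q => T.1 q r) ⊆ C1 := by
        intro q hq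
        simp only [Finset.mem_filter] at hq
        rw [hmemC1]
        constructor
        · intro he; exact hxhmax r (he ▸ hq.2)
        · intro he
          have h5 := hx2up r (he ▸ hq.2)
          have hr' := hr
          rw [hR, Finset.mem_sdiff] at hr'
          exact hr'.2 (h5 ▸ hxhQ)
      have hdisj : Disjoint ((Q.filter (fun q => T.1 q r)).image φ) ({yh, y2} : Finset (Fin (k+2))) := by
        rw [Finset.disjoint_right]
        intro a ha hamem
        simp only [Finset.mem_image] at hamem
        obtain ⟨w, hw, rfl⟩ := hamem
        have := (hmemC3 (φ w)).mp (hmaps w (hQfilterC1 hw))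
        simp only [Finset.mem_insert, Finset.mem_singleton] at ha
        rcases ha with rfl | rfl
        · exact this.1 rfl
        · exact this.2 rfl
      rw [hL]
      simp only
      rw [hineq, Finset.card_union_of_disjoint hdisj,
        Finset.card_image_of_injOn (fun a ha b hb he => hinj
          (by exact_mod_cast hQfilterC1 ha) (by exact_mod_cast hQfilterC1 hb) he)]
      rw [Finset.card_pair (fun he => hy2yh he.symm)]
    -- pump!
    obtain ⟨r, hrR, hrmax⟩ := Finset.exists_max_image R L hRne
    have := hrmax (φ r) (hphiR r hrR)
    rw [claimB r hrR] at this
    omega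

end Cases3

section KeyLemma

open Finset

open Classical in
/-- the key lemma: no `(k+2)`-element poset has all its convex `k`-subsets isomorphic
to a fixed `k`-order which is neither a chain nor an antichain -/
theorem keyLemma {k : ℕ} (p : FinSPO k) (hcp : ¬IsChainRep p) (hap : ¬IsAntichainRep p)
    (T : FinSPO (k + 2)) (H : ∀ r : FinSPO k, RepConvex T.1 r → IsoFin r p) : False := by
  classical
  have hk3 : 3 ≤ k := three_le_of_not_chain_antichain hcp hap
  have htr := T.2.1
  have hirr := T.2.2
  -- T is not an antichain
  have hpair : ∃ a b : Fin (k+2), T.1 a b := by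
    by_contra hanti
    push_neg at hanti
    obtain ⟨S0, _, hS0card⟩ := Finset.exists_subset_card_eq
      (show k ≤ (univ : Finset (Fin (k+2))).card by
        rw [Finset.card_univ, Fintype.card_fin]; omega)
    exact hap (antichain_transfer H
      (fun x _ y _ z h1 _ => absurd h1 (hanti x z)) hS0card
      (fun a _ b _ h => absurd h (hanti a b)))
  obtain ⟨a0, b0, hab⟩ := hpair
  have hreachmax : ∀ v : Fin (k+2), ∃ x, (∀ u, ¬ T.1 x u) ∧ (x = v ∨ T.1 v x) := by
    intro v
    obtain ⟨x, hxW, hxmax⟩ := exists_rel_max htr hirr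
      (Set.toFinite {w : Fin (k+2) | w = v ∨ T.1 v w}) ⟨v, Or.inl rfl⟩
    refine ⟨x, ?_, hxW⟩
    intro u hu
    refine hxmax u ?_ hu
    rcases hxW with rfl | hx
    · exact Or.inr hu
    · exact Or.inr (htr hx hu)
  have hreachmin : ∀ v : Fin (k+2), ∃ y, (∀ u, ¬ T.1 u y) ∧ (y = v ∨ T.1 y v) := by
    intro v
    obtain ⟨y, hyW, hymin⟩ := exists_rel_min htr hirr
      (Set.toFinite {w : Fin (k+2) | w = v ∨ T.1 w v}) ⟨v, Or.inl rfl⟩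
    refine ⟨y, ?_, hyW⟩
    intro u hu
    refine hymin u ?_ hu
    rcases hyW with rfl | hy
    · exact Or.inr hu
    · exact Or.inr (htr hu hy)
  obtain ⟨x0, hx0max, hx0r⟩ := hreachmax b0
  obtain ⟨y0, hy0min, hy0r⟩ := hreachmin a0
  have hr0 : T.1 y0 x0 := by
    rcases hx0r with rfl | hx0r <;> rcases hy0r with rfl | hy0r
    · exact hab
    · exact htr hy0r hab
    · exact htr hab hx0r
    · exact htr hy0r (htr hab hx0r)
  by_cases hM : ∀ x, (∀ u, ¬ T.1 x u) → x = x0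
  · -- unique maximal element
    have hmaxall : ∀ v, v ≠ x0 → T.1 v x0 := by
      intro v hv
      obtain ⟨x, hxmax, hxr⟩ := hreachmax v
      have := hM x hxmax
      subst this
      rcases hxr with rfl | hxr
      · exact absurd rfl hv
      · exact hxr
    by_cases hm : ∀ y, (∀ u, ¬ T.1 u y) → y = y0
    · have hminall : ∀ v, v ≠ y0 → T.1 y0 v := by
        intro v hv
        obtain ⟨y, hymin, hyr⟩ := hreachmin v
        have := hm y hymin
        subst this
        rcases hyr with rfl | hyr
        · exact absurd rfl hv
        · exact hyr
      exact caseBoth H hcp hk3 hmaxall hminall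
    · push_neg at hm
      obtain ⟨y1, hy1min, hy1ne⟩ := hm
      exact caseUM H hk3 hmaxall hy0min hy1min (fun h => hy1ne h.symm)
  · push_neg at hM
    obtain ⟨x1, hx1max, hx1ne⟩ := hM
    by_cases hm : ∀ y, (∀ u, ¬ T.1 u y) → y = y0
    · -- unique minimal element: dualize
      have hminall : ∀ v, v ≠ y0 → T.1 y0 v := by
        intro v hv
        obtain ⟨y, hymin, hyr⟩ := hreachmin v
        have := hm y hymin
        subst this
        rcases hyr with rfl | hyr
        · exact absurd rfl hv
        · exact hyr
      exact caseUM (T := opSPO T) (p := opSPO p) (opSPO_H H) hk3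
        (xh := y0) (y1 := x0) (y2 := x1)
        (fun v hv => hminall v hv) (fun u => hx0max u) (fun u => hx1max u)
        (fun h => hx1ne h.symm)
    · push_neg at hm
      obtain ⟨y1, hy1min, hy1ne⟩ := hm
      by_cases hxy : x1 ≠ y1
      · exact mainCase H hx0max hx1max hy0min hy1min (fun h => hx1ne h.symm)
          (fun h => hy1ne h.symm) hxy hr0
      · push_neg at hxy
        subst hxy
        -- x1 = y1 is an isolated point z
        by_cases hM2 : ∃ x', (∀ u, ¬ T.1 x' u) ∧ x' ≠ x0 ∧ x' ≠ x1
        · obtain ⟨x', hx'max, hx'0, hx'1⟩ := hM2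
          exact mainCase H hx0max hx'max hy0min hy1min (fun h => hx'0 h.symm)
            (fun h => hy1ne h.symm) hx'1 hr0
        · by_cases hm2 : ∃ y', (∀ u, ¬ T.1 u y') ∧ y' ≠ y0 ∧ y' ≠ x1
          · obtain ⟨y', hy'min, hy'0, hy'1⟩ := hm2
            exact mainCase H hx0max hx1max hy0min hy'min (fun h => hx1ne h.symm)
              (fun h => hy'0 h.symm) (fun h => hy'1 h.symm) hr0
          · push_neg at hM2 hm2
            exact degenCase H hk3 hx0max hy0min hx1max hy1min
              (fun h => hx1ne h.symm) (fun h => hy1ne h.symm)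
              (fun x hx => by
                rcases Classical.em (x = x0) with h | h
                · exact Or.inl h
                · exact Or.inr (hM2 x hx h))
              (fun y hy => by
                rcases Classical.em (y = y0) with h | h
                · exact Or.inl h
                · exact Or.inr (hm2 y hy h))
              hr0

end KeyLemma

section Part2

/-- the trivial one-point representative -/
def onePt : FinSPO 1 := ⟨fun _ _ => False, fun {_ _ _} h1 _ => h1.elim, fun _ h => h⟩

theorem part2 (P : ∀ m : ℕ, Set (NOrder (m + 1))) (hP : InfPath P) (m : ℕ) :
    ¬ ∃ p : FinSPO (m + 1), P m = {toNOrder p} ∧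
      ¬ IsChainRep p ∧ ¬ IsAntichainRep p := by
  rintro ⟨p, hPm, hcp, hap⟩
  obtain ⟨h0, hnodes, hstep⟩ := hP
  have hne : ∀ n, (P n).Nonempty := by
    intro n
    induction n with
    | zero => rw [h0]; exact ⟨toNOrder onePt, trivial⟩
    | succ n ih =>
      obtain ⟨o, ho⟩ := ih
      rw [hstep n] at ho
      obtain ⟨q, _, pb, hpb, _⟩ := ho
      exact ⟨toNOrder pb, hpb⟩
  have claim : ∀ n, m ≤ n → ∀ q : FinSPO (n + 1), toNOrder q ∈ P n →
      ∀ r : FinSPO (m + 1), RepConvex q.1 r → IsoFin r p := by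
    intro n hn
    induction n, hn using Nat.le_induction with
    | base =>
      intro q hq r hr
      rw [hPm, Set.mem_singleton_iff, toNOrder_eq_iff] at hq
      obtain ⟨g, hginj, _, hgrel⟩ := hr
      have hbij : Function.Bijective g := Finite.injective_iff_bijective.mp hginj
      exact isoFin_trans ⟨Equiv.ofBijective g hbij, fun a b => hgrel a b⟩ hq
    | succ n hmn ih =>
      intro q hq r hr
      obtain ⟨q', hq'1, hq'2⟩ := grow_to q r (n + 1) (by omega) (by omega) hr
      have hq'mem : toNOrder q' ∈ P n := by
        rw [hstep n]
        exact ⟨q', rfl, q, hq, hq'1⟩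
      exact ih q' hq'mem r hq'2
  obtain ⟨o, ho⟩ := hne (m + 2)
  obtain ⟨q2, hq2⟩ := Quot.exists_rep o
  have hq2mem : toNOrder q2 ∈ P (m + 2) := by rw [← hq2] at ho; exact ho
  exact keyLemma p hcp hap q2 (fun r hr => claim (m + 2) (by omega) q2 hq2mem r hr)

end Part2

section Chains

open Finset

/-- the canonical chain representative -/
def chainRep (n : ℕ) : FinSPO n :=
  ⟨fun a b => a < b, fun _ _ _ h1 h2 => lt_trans h1 h2, fun a => lt_irrefl a⟩

/-- the canonical antichain representative -/
def antiRep (n : ℕ) : FinSPO n :=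
  ⟨fun _ _ => False, fun {_ _ _} h1 _ => h1.elim, fun _ h => h⟩

theorem chainRep_isChain (n : ℕ) : IsChainRep (chainRep n) :=
  fun a b hab => lt_or_gt_of_ne hab

theorem antiRep_isAnti (n : ℕ) : IsAntichainRep (antiRep n) := fun _ _ h => h

open Classical in
/-- any two chains on `Fin n` are isomorphic -/
theorem chain_iso {n : ℕ} {p q : FinSPO n} (hp : IsChainRep p) (hq : IsChainRep q) :
    IsoFin p q := by
  classical
  have key : ∀ (s : FinSPO n), IsChainRep s →
      ∃ rk : Fin n → Fin n, Function.Bijective rk ∧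
        ∀ a b, s.1 a b ↔ rk a < rk b := by
    intro s hs
    have hmono : ∀ a b, s.1 a b →
        (univ.filter (fun c => s.1 c a)) ⊂ (univ.filter (fun c => s.1 c b)) := by
      intro a b hab
      refine Finset.ssubset_iff_of_subset ?_ |>.mpr ?_
      · intro c hc
        simp only [Finset.mem_filter, Finset.mem_univ, true_and] at hc ⊢
        exact s.2.1 hc hab
      · exact ⟨a, by simp [hab], by simp [s.2.2 a]⟩
    set rk : Fin n → Fin n := fun a =>
      ⟨(univ.filter (fun c => s.1 c a)).card, by
        have hsub : univ.filter (fun c => s.1 c a) ⊆ univ.erase a := by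
          intro c hc
          simp only [Finset.mem_filter, Finset.mem_univ, true_and] at hc
          exact Finset.mem_erase.mpr ⟨fun he => s.2.2 a (he ▸ hc), mem_univ _⟩
        have h1 := Finset.card_le_card hsub
        have h2 : (univ.erase a).card = n - 1 := by
          rw [Finset.card_erase_of_mem (mem_univ _)]
          simp
        have h3 : 0 < n := a.pos
        omega⟩ with hrk
    have hlt : ∀ a b, s.1 a b → rk a < rk b := by
      intro a b hab
      exact Finset.card_lt_card (hmono a b hab)
    have hiff : ∀ a b, s.1 a b ↔ rk a < rk b := by
      intro a b
      refine ⟨hlt a b, fun hab => ?_⟩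
      have hne : a ≠ b := by
        intro he
        subst he
        exact lt_irrefl _ hab
      rcases hs a b hne with h | h
      · exact h
      · exact absurd (hlt b a h) (lt_asymm hab)
    have hinj : Function.Injective rk := by
      intro a b he
      by_contra hne
      rcases hs a b hne with h | h
      · have := hlt a b h
        rw [he] at this
        exact lt_irrefl _ this
      · have := hlt b a h
        rw [he] at this
        exact lt_irrefl _ this
    exact ⟨rk, Finite.injective_iff_bijective.mp hinj, hiff⟩
  obtain ⟨rkp, hpbij, hpiff⟩ := key p hp
  obtain ⟨rkq, hqbij, hqiff⟩ := key q hq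
  refine ⟨(Equiv.ofBijective _ hpbij).trans (Equiv.ofBijective _ hqbij).symm,
    fun a b => ?_⟩
  rw [hpiff a b, hqiff]
  have h1 : ∀ c, rkq ((Equiv.ofBijective _ hqbij).symm ((Equiv.ofBijective _ hpbij) c)) = rkp c := by
    intro c
    exact (Equiv.ofBijective _ hqbij).apply_symm_apply _
  simp only [Equiv.trans_apply]
  rw [h1 a, h1 b]

end Chains

section Causets

theorem isChainRep_of_embed {n : ℕ} {α : Type*} {r : α → α → Prop}
    (htot : ∀ a b : α, a ≠ b → r a b ∨ r b a) {q : FinSPO n}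
    (h : RepConvex r q) : IsChainRep q := by
  obtain ⟨g, hginj, _, hgrel⟩ := h
  intro a b hab
  rcases htot (g a) (g b) (fun he => hab (hginj he)) with h | h
  · exact Or.inl ((hgrel a b).mpr h)
  · exact Or.inr ((hgrel b a).mpr h)

theorem isAntichainRep_of_embed {n : ℕ} {α : Type*} {r : α → α → Prop}
    (hnone : ∀ a b : α, ¬ r a b) {q : FinSPO n}
    (h : RepConvex r q) : IsAntichainRep q := by
  obtain ⟨g, _, _, hgrel⟩ := h
  intro a b hr
  exact hnone _ _ ((hgrel a b).mp hr)

/-- `ℕ` with `<` -/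
def chainCauset : Causet where
  carrier := ℕ
  rel := (· < ·)
  countable := inferInstance
  trans := fun _ _ _ h1 h2 => lt_trans h1 h2
  irrefl := fun x => lt_irrefl x
  locFin := fun x y => Set.Finite.subset (Set.finite_Iio y) (fun z hz => hz.2)

/-- `ℕ` with the empty relation -/
def antiCauset : Causet where
  carrier := ℕ
  rel := fun _ _ => False
  countable := inferInstance
  trans := fun {_ _ _} h1 _ => h1.elim
  irrefl := fun _ h => h
  locFin := fun x y => Set.Finite.subset (Set.finite_empty) (fun z hz => hz.1.elim)

/-- the empty causet -/
def emptyCauset : Causet where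
  carrier := PEmpty
  rel := fun _ _ => False
  countable := inferInstance
  trans := fun {_ _ _} h1 _ => h1.elim
  irrefl := fun _ h => h
  locFin := fun x y => Set.Finite.subset (Set.finite_empty) (fun z hz => hz.1.elim)

theorem repConvex_chainCauset (n : ℕ) : RepConvex chainCauset.rel (chainRep n) := by
  refine ⟨Fin.val, Fin.val_injective, ⟨Set.finite_range _, ?_⟩, fun a b => Iff.rfl⟩
  rintro x ⟨a, rfl⟩ y ⟨b, rfl⟩ z h1 h2
  exact ⟨⟨z, lt_trans h2 b.2⟩, rfl⟩

theorem repConvex_antiCauset (n : ℕ) : RepConvex antiCauset.rel (antiRep n) := by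
  refine ⟨Fin.val, Fin.val_injective, ⟨Set.finite_range _, ?_⟩, fun a b => Iff.rfl⟩
  rintro x hx y hy z h1 h2
  exact h1.elim

theorem cert_chain (n : ℕ) :
    convexSubords chainCauset.rel n = {toNOrder (chainRep n)} := by
  ext o
  constructor
  · rintro ⟨q, rfl, hq⟩
    have : IsChainRep q := isChainRep_of_embed (r := chainCauset.rel) (fun a b hab => lt_or_gt_of_ne hab) hq
    exact Set.mem_singleton_iff.mpr (toNOrder_eq_iff.mpr (chain_iso this (chainRep_isChain n)))
  · rintro rfl
    exact ⟨chainRep n, rfl, repConvex_chainCauset n⟩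

theorem cert_anti (n : ℕ) :
    convexSubords antiCauset.rel n = {toNOrder (antiRep n)} := by
  ext o
  constructor
  · rintro ⟨q, rfl, hq⟩
    have hqa : IsAntichainRep q := isAntichainRep_of_embed (fun a b h => h) hq
    refine Set.mem_singleton_iff.mpr (toNOrder_eq_iff.mpr ⟨Equiv.refl _, fun a b => ?_⟩)
    simp only [Equiv.refl_apply]
    exact ⟨fun h => absurd h (hqa a b), fun h => h.elim⟩
  · rintro rfl
    exact ⟨antiRep n, rfl, repConvex_antiCauset n⟩

theorem cert_empty (n : ℕ) :
    convexSubords emptyCauset.rel (n + 1) = ∅ := by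
  ext o
  simp only [Set.mem_empty_iff_false, iff_false]
  rintro ⟨q, rfl, g, -⟩
  exact (g ⟨0, Nat.succ_pos n⟩).elim

theorem Ominus_empty (n : ℕ) : Ominus (∅ : Set (NOrder (n + 1))) = ∅ := by
  ext o
  simp only [Set.mem_empty_iff_false, iff_false]
  rintro ⟨q, rfl, pb, hpb, _⟩
  exact hpb

theorem repConvex_castSucc_chain (n : ℕ) :
    RepConvex (chainRep (n + 1)).1 (chainRep n) := by
  refine ⟨Fin.castSucc, Fin.castSucc_injective n, ⟨Set.toFinite _, ?_⟩, fun a b => ?_⟩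
  · rintro x ⟨a, rfl⟩ y ⟨b, rfl⟩ z h1 h2
    have hz : z.val < n := lt_of_lt_of_le h2 (by
      have := b.2
      simp only [Fin.castSucc, Fin.coe_castAdd] at *
      omega)
    exact ⟨⟨z.val, hz⟩, by ext; simp⟩
  · constructor
    · intro h; exact Fin.castSucc_lt_castSucc_iff.mpr h
    · intro h; exact Fin.castSucc_lt_castSucc_iff.mp h

theorem repConvex_castSucc_anti (n : ℕ) :
    RepConvex (antiRep (n + 1)).1 (antiRep n) := by
  refine ⟨Fin.castSucc, Fin.castSucc_injective n, ⟨Set.toFinite _, ?_⟩, fun a b => Iff.rfl⟩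
  rintro x _ y _ z h1 _
  exact h1.elim

theorem Ominus_chain (n : ℕ) :
    Ominus {toNOrder (chainRep (n + 1))} = {toNOrder (chainRep n)} := by
  ext o
  constructor
  · rintro ⟨q, rfl, pb, hpb, hrep⟩
    rw [Set.mem_singleton_iff, toNOrder_eq_iff] at hpb
    have hpbchain : IsChainRep pb := isChain_of_iso (isoFin_symm hpb) (chainRep_isChain (n+1))
    have : IsChainRep q := isChainRep_of_embed (fun a b hab => hpbchain a b hab) hrep
    exact Set.mem_singleton_iff.mpr (toNOrder_eq_iff.mpr (chain_iso this (chainRep_isChain n)))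
  · rintro rfl
    exact ⟨chainRep n, rfl, chainRep (n + 1), rfl, repConvex_castSucc_chain n⟩

theorem Ominus_anti (n : ℕ) :
    Ominus {toNOrder (antiRep (n + 1))} = {toNOrder (antiRep n)} := by
  ext o
  constructor
  · rintro ⟨q, rfl, pb, hpb, hrep⟩
    rw [Set.mem_singleton_iff, toNOrder_eq_iff] at hpb
    have hpbanti : IsAntichainRep pb := isAntichain_of_iso (isoFin_symm hpb) (antiRep_isAnti (n+1))
    have hqa : IsAntichainRep q := isAntichainRep_of_embed (fun a b h => hpbanti a b h) hrep
    refine Set.mem_singleton_iff.mpr (toNOrder_eq_iff.mpr ⟨Equiv.refl _, fun a b => ?_⟩)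
    simp only [Equiv.refl_apply]
    exact ⟨fun h => absurd h (hqa a b), fun h => h.elim⟩
  · rintro rfl
    exact ⟨antiRep n, rfl, antiRep (n + 1), rfl, repConvex_castSucc_anti n⟩

/-- transfer of convex suborders along an isomorphism of the ambient representative -/
theorem repConvex_congr {n N : ℕ} {pb pb' : FinSPO N} (hiso : IsoFin pb pb')
    {q : FinSPO n} (h : RepConvex pb.1 q) : RepConvex pb'.1 q := by
  obtain ⟨g, hg⟩ := hiso
  obtain ⟨h0, h0inj, ⟨_, h0conv⟩, h0rel⟩ := h
  refine ⟨fun a => g (h0 a), g.injective.comp h0inj, ⟨Set.toFinite _, ?_⟩, fun a b => ?_⟩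
  · rintro x ⟨a, rfl⟩ y ⟨b, rfl⟩ z h1 h2
    have hz1 : pb.1 (h0 a) (g.symm z) := by
      rw [hg]
      simpa using h1
    have hz2 : pb.1 (g.symm z) (h0 b) := by
      rw [hg]
      simpa using h2
    obtain ⟨c, hc⟩ := h0conv (h0 a) ⟨a, rfl⟩ (h0 b) ⟨b, rfl⟩ (g.symm z) hz1 hz2
    exact ⟨c, by show g (h0 c) = z; rw [hc]; simp⟩
  · rw [h0rel a b, hg]

end Causets

section Part1

open Classical in
theorem part1 (P : ∀ m : ℕ, Set (NOrder (m + 1))) (j : ℕ) (hP : FinPath P j) :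
    ∃ m : ℕ, m ≤ j ∧ ∃ p : FinSPO (m + 1), P m = {toNOrder p} ∧
      ¬ IsChainRep p ∧ ¬ IsAntichainRep p := by
  classical
  obtain ⟨h0, hnodes, hsteps, hmax⟩ := hP
  obtain ⟨C, hC⟩ := hnodes j le_rfl
  -- hC : convexSubords C.rel (j+1) = P j
  by_cases hbig : ∃ g : Fin (j + 2) → C.carrier, Function.Injective g
  · exfalso
    apply hmax
    refine ⟨convexSubords C.rel (j + 2), ⟨C, rfl⟩, ?_⟩
    rw [← hC]
    ext o
    constructor
    · rintro ⟨q, rfl, pb, hpb, hrep⟩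
      obtain ⟨pb', hpb'e, hpb'⟩ := hpb
      have hiso : IsoFin pb pb' := toNOrder_eq_iff.mp hpb'e
      exact ⟨q, rfl, repConvex_comp hpb' (repConvex_congr hiso hrep)⟩
    · rintro ⟨q, rfl, hrep⟩
      obtain ⟨ginj, hginj⟩ := hbig
      obtain ⟨pb, hpb1, hpb2⟩ := grow_one_gen C.trans C.irrefl C.locFin q hrep
        (fun g hg => exists_out_of_range (by omega) hginj hg)
      exact ⟨q, rfl, pb, ⟨pb, rfl, hpb1⟩, hpb2⟩
  · rcases Set.eq_empty_or_nonempty (P j) with hPj | ⟨o, ho⟩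
    · exfalso
      apply hmax
      refine ⟨(∅ : Set (NOrder (j + 2))), ⟨emptyCauset, cert_empty (j + 1)⟩, ?_⟩
      rw [Ominus_empty, hPj]
    · rw [← hC] at ho
      obtain ⟨q, hoq, hrep⟩ := ho
      -- every (j+1)-embedding is surjective
      have hsurjAll : ∀ g' : Fin (j + 1) → C.carrier, Function.Injective g' →
          ∀ z : C.carrier, z ∈ Set.range g' := by
        intro g' hg' z
        by_contra hz
        exact hbig ⟨Fin.snoc g' z, snoc_inj hg' hz⟩
      have hPjq : P j = {toNOrder q} := by
        rw [← hC]
        ext o'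
        constructor
        · rintro ⟨q', rfl, g', hg'inj, _, hg'rel⟩
          obtain ⟨g, hginj, _, hgrel⟩ := hrep
          have hb' : Function.Bijective g' := ⟨hg'inj, fun z => hsurjAll g' hg'inj z⟩
          have hb : Function.Bijective g := ⟨hginj, fun z => hsurjAll g hginj z⟩
          set e := (Equiv.ofBijective g' hb').trans (Equiv.ofBijective g hb).symm with he
          refine Set.mem_singleton_iff.mpr (toNOrder_eq_iff.mpr ⟨e, fun a b => ?_⟩)
          rw [hg'rel a b, hgrel]
          have h1 : ∀ c, g (e c) = g' c := by
            intro c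
            simp only [he, Equiv.trans_apply]
            exact (Equiv.ofBijective g hb).apply_symm_apply _
          rw [h1 a, h1 b]
        · rintro rfl
          exact ⟨q, rfl, hrep⟩
      by_cases hqc : IsChainRep q
      · exfalso
        apply hmax
        refine ⟨{toNOrder (chainRep (j + 2))}, ⟨chainCauset, cert_chain (j + 2)⟩, ?_⟩
        rw [Ominus_chain, hPjq]
        exact congrArg (fun x : NOrder (j + 1) => ({x} : Set (NOrder (j + 1))))
          (toNOrder_eq_iff.mpr (chain_iso (chainRep_isChain (j+1)) hqc))
      · by_cases hqa : IsAntichainRep q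
        · exfalso
          apply hmax
          refine ⟨{toNOrder (antiRep (j + 2))}, ⟨antiCauset, cert_anti (j + 2)⟩, ?_⟩
          rw [Ominus_anti, hPjq]
          refine congrArg (fun x : NOrder (j + 1) => ({x} : Set (NOrder (j + 1))))
            (toNOrder_eq_iff.mpr ⟨Equiv.refl _, fun a b => ?_⟩)
          simp only [Equiv.refl_apply]
          exact ⟨fun h => h.elim, fun h => absurd h (hqa a b)⟩
        · exact ⟨j, le_rfl, q, hPjq, hqc, hqa⟩

end Part1


/-- an inextendible path in convex-covtree is finite if and only if it
contains a singleton node `{C_m}` where `C_m` is neither the `m`-chain nor the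
`m`-antichain. (Equivalently: every finite inextendible path contains such a node,
and no infinite path does.) -/
theorem stmt_13 :
    (∀ (P : ∀ m : ℕ, Set (NOrder (m + 1))) (j : ℕ), FinPath P j →
      ∃ m : ℕ, m ≤ j ∧ ∃ p : FinSPO (m + 1), P m = {toNOrder p} ∧
        ¬ IsChainRep p ∧ ¬ IsAntichainRep p) ∧
    (∀ P : ∀ m : ℕ, Set (NOrder (m + 1)), InfPath P →
      ∀ m : ℕ, ¬ ∃ p : FinSPO (m + 1), P m = {toNOrder p} ∧
        ¬ IsChainRep p ∧ ¬ IsAntichainRep p) := by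
  exact ⟨part1, part2⟩
end

section
/- If a set Γ_n of n-orders has a certificate admitting a natural labeling by ℤ, then Γ_n also has a certificate admitting a natural labeling by ℕ and a certificate admitting a natural labeling by the negative integers ℤ⁻. -/
/-- The causet `C` admits a natural labeling by ℤ. -/
def HasZLabel (C : Causet) : Prop :=
  ∃ f : ℤ → C.carrier, Function.Bijective f ∧
    ∀ i j : ℤ, C.rel (f i) (f j) → i < j

/-- The causet `C` admits a natural labeling by ℕ. -/
def HasNLabel (C : Causet) : Prop :=
  ∃ f : ℕ → C.carrier, Function.Bijective f ∧
    ∀ i j : ℕ, C.rel (f i) (f j) → i < j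

/-- The causet `C` admits a natural labeling by the negative integers ℤ⁻. -/
def HasNegLabel (C : Causet) : Prop :=
  ∃ f : {i : ℤ // i < 0} → C.carrier, Function.Bijective f ∧
    ∀ i j : {i : ℤ // i < 0}, C.rel (f i) (f j) → i.1 < j.1

section Aux

open Set Function

/-- If `φ : β → α` is injective with "r-convex" range, then every convex suborder of the
pullback of `r` along `φ` is a convex suborder of `r`. -/
lemma pullback_sub {α β : Type} (r : α → α → Prop) (φ : β → α) (hφ : Function.Injective φ)
    (hconv : ∀ x y z : α, x ∈ Set.range φ → y ∈ Set.range φ → r x z → r z y →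
      z ∈ Set.range φ) {n : ℕ} :
    convexSubords (fun i j => r (φ i) (φ j)) n ⊆ convexSubords r n := by
  rintro o ⟨p, ho, g, hg, ⟨hfin, hcv⟩, hrel⟩
  refine ⟨p, ho, φ ∘ g, hφ.comp hg, ⟨?_, ?_⟩, fun a b => hrel a b⟩
  · rw [Set.range_comp]
    exact (Set.finite_range g).image φ
  · rintro x ⟨a, rfl⟩ y ⟨b, rfl⟩ z hxz hzy
    obtain ⟨w, rfl⟩ := hconv _ _ z ⟨g a, rfl⟩ ⟨g b, rfl⟩ hxz hzy
    have hw : w ∈ Set.range g := hcv (g a) ⟨a, rfl⟩ (g b) ⟨b, rfl⟩ w hxz hzy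
    obtain ⟨c, rfl⟩ := hw
    exact ⟨c, rfl⟩

/-- If `p` is realised by a convex subset of `(α, r)` lying inside the range of an
injective `φ : β → α`, then `p` is realised in the pullback of `r` along `φ`. -/
lemma pullback_sup {α β : Type} (r : α → α → Prop) (φ : β → α) (hφ : Function.Injective φ)
    {n : ℕ} (p : FinSPO n) (g : Fin n → α) (hg : Function.Injective g)
    (hcv : IsConvexIn r (Set.range g)) (hrel : ∀ a b, p.1 a b ↔ r (g a) (g b))
    (hsub : ∀ a, g a ∈ Set.range φ) :
    RepConvex (fun i j => r (φ i) (φ j)) p := by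
  have hch : ∀ a, ∃ b, φ b = g a := hsub
  choose g'' hg'' using hch
  refine ⟨g'', ?_, ⟨Set.finite_range g'', ?_⟩, ?_⟩
  · intro a b hab
    apply hg
    rw [← hg'' a, ← hg'' b, hab]
  · rintro x ⟨a, rfl⟩ y ⟨b, rfl⟩ z h1 h2
    rw [hg''] at h1 h2
    have : φ z ∈ Set.range g := hcv.2 (g a) ⟨a, rfl⟩ (g b) ⟨b, rfl⟩ (φ z) h1 h2
    obtain ⟨c, hc⟩ := this
    have : z = g'' c := hφ (by rw [hg'', hc])
    exact ⟨c, this.symm⟩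
  · intro a b
    rw [hrel]
    show r (g a) (g b) ↔ r (φ (g'' a)) (φ (g'' b))
    rw [hg'', hg'']

lemma finite_NOrder (n : ℕ) : Finite (NOrder n) := by
  have h1 : Finite (FinSPO n) := by
    unfold FinSPO
    infer_instance
  exact Finite.of_surjective (Quot.mk _) (fun o => Quot.exists_rep o)

end Aux

/-- if a set `Γ` of `n`-orders has a certificate admitting a natural
labeling by ℤ, then it also has a certificate admitting a natural labeling by ℕ and
a certificate admitting a natural labeling by ℤ⁻. -/
theorem stmt_19 (n : ℕ) (Γ : Set (NOrder n))
    (h : ∃ C : Causet, HasZLabel C ∧ IsCert C Γ) :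
    (∃ C : Causet, HasNLabel C ∧ IsCert C Γ) ∧
      (∃ C : Causet, HasNegLabel C ∧ IsCert C Γ) := by
  classical
  obtain ⟨C, ⟨f, hfb, hfl⟩, hcert⟩ := h
  -- pull the causet back to ℤ
  set r : ℤ → ℤ → Prop := fun i j => C.rel (f i) (f j) with hr
  have hlt : ∀ i j : ℤ, r i j → i < j := hfl
  have htr : Transitive r := fun _ _ _ h1 h2 => C.trans h1 h2
  have hirr : ∀ i : ℤ, ¬ r i i := fun i => C.irrefl (f i)
  have hΓ : convexSubords r n = Γ := by
    rw [← hcert]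
    apply Set.Subset.antisymm
    · exact pullback_sub C.rel f hfb.injective (fun x y z _ _ _ _ => hfb.surjective z)
    · rintro o ⟨p, ho, g, hg, hcv, hrel⟩
      exact ⟨p, ho, pullback_sup C.rel f hfb.injective p g hg hcv hrel
        (fun a => hfb.surjective (g a))⟩
  -- Γ is finite, so all its orders are realised within a bounded band of labels
  have : Finite (NOrder n) := finite_NOrder n
  have hfin : Γ.Finite := Set.toFinite Γ
  have key : ∃ k K : ℤ, ∀ o ∈ Γ, ∃ p : FinSPO n, o = toNOrder p ∧
      ∃ g : Fin n → ℤ, Function.Injective g ∧ IsConvexIn r (Set.range g) ∧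
        (∀ a b, p.1 a b ↔ r (g a) (g b)) ∧ ∀ a, k ≤ g a ∧ g a ≤ K := by
    have hsub : Γ ⊆ convexSubords r n := hΓ.symm ▸ Set.Subset.rfl
    have : Finite (↥Γ) := hfin.to_subtype
    have hchoice : ∀ o : Γ, ∃ p : FinSPO n, (o : NOrder n) = toNOrder p ∧
        ∃ g : Fin n → ℤ, Function.Injective g ∧ IsConvexIn r (Set.range g) ∧
          ∀ a b, p.1 a b ↔ r (g a) (g b) := by
      intro o
      obtain ⟨p, hp, g, hg, hcv, hrel⟩ := hsub o.2
      exact ⟨p, hp, g, hg, hcv, hrel⟩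
    choose P hP G hG1 hG2 hG3 using hchoice
    have hT : (⋃ o : Γ, Set.range (G o)).Finite :=
      Set.finite_iUnion (fun o => Set.finite_range (G o))
    obtain ⟨k, hk⟩ := hT.bddBelow
    obtain ⟨K, hK⟩ := hT.bddAbove
    refine ⟨k, K, fun o ho => ⟨P ⟨o, ho⟩, hP ⟨o, ho⟩, G ⟨o, ho⟩, hG1 _, hG2 _, hG3 _, fun a => ?_⟩⟩
    have hmem : G ⟨o, ho⟩ a ∈ ⋃ o : Γ, Set.range (G o) :=
      Set.mem_iUnion.2 ⟨⟨o, ho⟩, a, rfl⟩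
    exact ⟨hk hmem, hK hmem⟩
  obtain ⟨k, K, hkK⟩ := key
  constructor
  · -- ℕ-labeled certificate: restrict to labels ≥ k
    set φ : ℕ → ℤ := fun i => k + i with hφdef
    have hφi : Function.Injective φ := by
      intro i j hij
      simp only [hφdef] at hij
      omega
    have hφr : ∀ z : ℤ, z ∈ Set.range φ ↔ k ≤ z := by
      intro z
      constructor
      · rintro ⟨i, rfl⟩; simp only [hφdef]; omega
      · intro hz; exact ⟨(z - k).toNat, by simp only [hφdef]; omega⟩
    refine ⟨⟨ℕ, fun i j => r (φ i) (φ j), inferInstance,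
      fun _ _ _ h1 h2 => htr h1 h2, fun i => hirr (φ i), ?_⟩, ⟨id, Function.bijective_id, ?_⟩, ?_⟩
    · intro x y
      apply (Set.finite_Iio y).subset
      intro z hz
      have h1 := hlt _ _ hz.1
      have h2 := hlt _ _ hz.2
      simp only [hφdef] at h1 h2
      simp only [Set.mem_Iio]
      omega
    · intro i j hij
      have := hlt _ _ hij
      simp only [hφdef, id] at this ⊢
      omega
    · show convexSubords (fun i j => r (φ i) (φ j)) n = Γ
      apply Set.Subset.antisymm
      · refine Set.Subset.trans (pullback_sub r φ hφi ?_) (le_of_eq hΓ)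
        intro x y z hx _ hxz _
        rw [hφr] at hx ⊢
        have := hlt _ _ hxz
        omega
      · intro o ho
        obtain ⟨p, hp, g, hg, hcv, hrel, hb⟩ := hkK o ho
        exact ⟨p, hp, pullback_sup r φ hφi p g hg hcv hrel
          (fun a => (hφr (g a)).2 (hb a).1)⟩
  · -- ℤ⁻-labeled certificate: restrict to labels ≤ K
    set ψ : {i : ℤ // i < 0} → ℤ := fun i => K + 1 + i.1 with hψdef
    have hψi : Function.Injective ψ := by
      intro i j hij
      simp only [hψdef] at hij
      exact Subtype.ext (by omega)
    have hψr : ∀ z : ℤ, z ∈ Set.range ψ ↔ z ≤ K := by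
      intro z
      constructor
      · rintro ⟨i, rfl⟩; have := i.2; simp only [hψdef]; omega
      · intro hz; exact ⟨⟨z - (K + 1), by omega⟩, by simp only [hψdef]; omega⟩
    refine ⟨⟨{i : ℤ // i < 0}, fun i j => r (ψ i) (ψ j), inferInstance,
      fun _ _ _ h1 h2 => htr h1 h2, fun i => hirr (ψ i), ?_⟩, ⟨id, Function.bijective_id, ?_⟩, ?_⟩
    · intro x y
      apply ((Set.finite_Ioo x.1 y.1).preimage (Subtype.val_injective.injOn)).subset
      intro z hz
      have h1 := hlt _ _ hz.1
      have h2 := hlt _ _ hz.2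
      simp only [hψdef] at h1 h2
      simp only [Set.mem_preimage, Set.mem_Ioo]
      omega
    · intro i j hij
      have := hlt _ _ hij
      simp only [hψdef, id] at this ⊢
      omega
    · show convexSubords (fun i j => r (ψ i) (ψ j)) n = Γ
      apply Set.Subset.antisymm
      · refine Set.Subset.trans (pullback_sub r ψ hψi ?_) (le_of_eq hΓ)
        intro x y z _ hy _ hzy
        rw [hψr] at hy ⊢
        have := hlt _ _ hzy
        omega
      · intro o ho
        obtain ⟨p, hp, g, hg, hcv, hrel, hb⟩ := hkK o ho
        exact ⟨p, hp, pullback_sup r ψ hψi p g hg hcv hrel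
          (fun a => (hψr (g a)).2 (hb a).2)⟩
end
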